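/- arXiv:1907.07698 — 10 statements merged into one kernel-verified Lean document; each statement's English description precedes it below -/
import Mathlib

section
/- There exists a compact set C contained in the open interval (0,1) with positive Lebesgue measure such that the function f : [0,1] → ℝ defined by f(x) = ∫₀ˣ 1_C(t) dt satisfies: (i) |f(x) − f(y)| < d(x,y) for all x ≠ y in [0,1]; and (ii) sup_{x≠y in [0,1]} |f(x) − f(y)|/d(x,y) = 1. In other words, f has least Lipschitz constant exactly 1 with respect to the metric d, but f does not strongly attain its norm. -/
/-!
Take `C = [1/8, 7/8] \ G`, where `G` is the union of the balls of radius `4⁻ᵐ / 3` around the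
dyadic points `k / 2ᵐ ∈ [0, 1)`, `m ≥ 1`. These balls have total length `2/3 < 3/4`, so `C` has
positive measure. For `0 ≤ a < b ≤ 1` we have `f b - f a = |C ∩ (a, b]|` and
`d a b = 2 sin ((b - a) / 2) > ℓ - ℓ³ / 24` with `ℓ = b - a`; since `(a, b)` contains a dyadic
point `k / 2ᵐ` with `2⁻ᵐ ≥ ℓ / 4` together with its whole ball, of length `≥ ℓ² / 24 ≥ ℓ³ / 24`,
this gives `|f b - f a| < d a b`. Conversely, at a Lebesgue density point `x` of `C`,
`f (x + r) - f (x - r) = 2r (1 - o(1))` while `d (x - r) (x + r) = 2 sin r ≤ 2r`.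
-/

open MeasureTheory Set Real Filter Topology Metric
open scoped Interval

noncomputable section

def indicatorPrimitive (s : Set ℝ) (x : ℝ) : ℝ :=
  ∫ t in (0 : ℝ)..x, s.indicator (fun _ => (1 : ℝ)) t

def circleDist (x y : ℝ) : ℝ := √(2 * (1 - cos (x - y)))

lemma abs_indicatorPrimitive_sub {s : Set ℝ} (hs : MeasurableSet s) (x y : ℝ) :
    |indicatorPrimitive s x - indicatorPrimitive s y| = volume.real (s ∩ Ι x y) := by
  have hint : ∀ a b : ℝ, IntervalIntegrable (s.indicator fun _ => (1 : ℝ)) volume a b :=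
    fun _ _ => intervalIntegrable_iff.2
      ((integrableOn_const (C := (1 : ℝ)) measure_Ioc_lt_top.ne).indicator hs)
  rw [indicatorPrimitive, indicatorPrimitive,
    intervalIntegral.integral_interval_sub_left (hint 0 x) (hint 0 y),
    intervalIntegral.abs_integral_eq_abs_integral_uIoc, setIntegral_indicator hs,
    setIntegral_const, smul_eq_mul, mul_one, abs_of_nonneg measureReal_nonneg, uIoc_comm,
    inter_comm]

lemma circleDist_eq {x y : ℝ} (h : |x - y| ≤ 2 * π) :
    circleDist x y = 2 * sin (|x - y| / 2) := by
  rw [circleDist, ← cos_abs, sin_half_eq_sqrt (abs_nonneg _) h,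
    show 2 * (1 - cos |x - y|) = 2 ^ 2 * ((1 - cos |x - y|) / 2) by ring,
    sqrt_mul (by positivity), sqrt_sq zero_le_two]

lemma exists_ball_natCast_mul_subset_Ioo {δ r u v : ℝ} (hδ : 0 < δ) (hr : 0 ≤ r)
    (hu : 0 ≤ u) (h : δ + 2 * r ≤ v - u) : ∃ k : ℕ, ball (k * δ) r ⊆ Ioo u v := by
  refine ⟨⌈(u + r) / δ⌉₊, ?_⟩
  have hlow : u + r ≤ ⌈(u + r) / δ⌉₊ * δ :=
    (div_le_iff₀ hδ).1 (Nat.le_ceil _)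
  have hhigh : ⌈(u + r) / δ⌉₊ * δ < u + r + δ := by
    have := mul_lt_mul_of_pos_right (Nat.ceil_lt_add_one (by positivity : 0 ≤ (u + r) / δ)) hδ
    rwa [add_mul, div_mul_cancel₀ _ hδ.ne', one_mul] at this
  rw [Real.ball_eq_Ioo]
  exact Ioo_subset_Ioo (by linarith) (by linarith)

def dyadicGaps : Set ℝ :=
  ⋃ (m : ℕ) (k ∈ Finset.range (2 ^ (m + 1))),
    ball (k / 2 ^ (m + 1)) ((2 ^ (m + 1))⁻¹ ^ 2 / 3)

def fatCantor : Set ℝ := Icc (1 / 8) (7 / 8) \ dyadicGaps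

lemma isOpen_dyadicGaps : IsOpen dyadicGaps :=
  isOpen_iUnion fun _ => isOpen_biUnion fun _ _ => isOpen_ball

lemma isCompact_fatCantor : IsCompact fatCantor :=
  isCompact_Icc.diff isOpen_dyadicGaps

lemma measurableSet_fatCantor : MeasurableSet fatCantor :=
  isCompact_fatCantor.isClosed.measurableSet

lemma fatCantor_subset_Icc : fatCantor ⊆ Icc (1 / 8) (7 / 8) := sdiff_subset

lemma volume_dyadicGaps_le : volume dyadicGaps ≤ ENNReal.ofReal (2 / 3) := by
  have hlevel : ∀ m : ℕ, volume (⋃ k ∈ Finset.range (2 ^ (m + 1)),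
      ball ((k : ℝ) / 2 ^ (m + 1)) ((2 ^ (m + 1))⁻¹ ^ 2 / 3)) ≤
        ENNReal.ofReal (2 / 3 / 2 / 2 ^ m) := by
    intro m
    refine (measure_biUnion_finset_le _ _).trans_eq ?_
    simp only [Real.volume_ball, Finset.sum_const, Finset.card_range, nsmul_eq_mul]
    rw [← ENNReal.ofReal_natCast, ← ENNReal.ofReal_mul (by positivity)]
    congr 1
    push_cast
    field_simp
    ring
  calc volume dyadicGaps ≤ ∑' m : ℕ, ENNReal.ofReal (2 / 3 / 2 / 2 ^ m) :=
        (measure_iUnion_le _).trans (ENNReal.tsum_le_tsum hlevel)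
    _ = ENNReal.ofReal (2 / 3) := by
        rw [← ENNReal.ofReal_tsum_of_nonneg (fun _ => by positivity) (summable_geometric_two' _),
          tsum_geometric_two']

lemma volume_fatCantor_pos : 0 < volume fatCantor :=
  calc (0 : ENNReal) < ENNReal.ofReal (3 / 4) - ENNReal.ofReal (2 / 3) :=
        tsub_pos_of_lt ((ENNReal.ofReal_lt_ofReal_iff (by norm_num)).2 (by norm_num))
    _ ≤ volume (Icc (1 / 8 : ℝ) (7 / 8)) - volume dyadicGaps := by
        rw [Real.volume_Icc]; exact tsub_le_tsub (by norm_num) volume_dyadicGaps_le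
    _ ≤ volume fatCantor := le_measure_sdiff

lemma exists_ball_subset_dyadicGaps_inter_Ioo {a b : ℝ} (ha : 0 ≤ a) (hab : a < b)
    (hb : b ≤ 1) :
    ∃ c r, ball c r ⊆ dyadicGaps ∩ Ioo a b ∧ (b - a) ^ 3 / 24 ≤ 2 * r := by
  have hℓ : 0 < b - a := sub_pos.2 hab
  obtain ⟨n, hn, hn'⟩ := exists_nat_pow_near
    ((one_le_div hℓ).2 (by linarith) : 1 ≤ 2 / (b - a)) one_lt_two
  set δ : ℝ := (2 ^ (n + 1))⁻¹ with hδ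
  have hδ0 : 0 < δ := by positivity
  have hδ4 : (b - a) / 4 ≤ δ :=
    calc (b - a) / 4 = (2 * (2 / (b - a)))⁻¹ := by field_simp; norm_num
      _ ≤ (2 * 2 ^ n)⁻¹ := inv_anti₀ (by positivity) (by linarith)
      _ = δ := by rw [hδ, pow_succ, mul_comm]
  have hδ2 : δ < (b - a) / 2 :=
    calc δ < (2 / (b - a))⁻¹ := inv_strictAnti₀ (by positivity) hn'
      _ = (b - a) / 2 := inv_div _ _
  obtain ⟨k, hk⟩ := exists_ball_natCast_mul_subset_Ioo (v := b) hδ0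
    (by positivity : 0 ≤ δ ^ 2 / 3) ha (by nlinarith)
  have hkb : (k : ℝ) * δ < b := (hk (mem_ball_self (by positivity))).2
  have hk_lt : k < 2 ^ (n + 1) := by
    have : (k : ℝ) < 2 ^ (n + 1) := by
      rw [← mul_lt_mul_iff_of_pos_right hδ0, hδ, mul_inv_cancel₀ (by positivity)]; linarith
    exact_mod_cast this
  have hsq : ((b - a) / 4) ^ 2 ≤ δ ^ 2 := pow_le_pow_left₀ (by positivity) hδ4 2
  have hcube : (b - a) ^ 3 ≤ (b - a) ^ 2 :=
    pow_le_pow_of_le_one hℓ.le (by linarith) (by norm_num)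
  refine ⟨k * δ, δ ^ 2 / 3, subset_inter ?_ hk, by nlinarith⟩
  refine subset_iUnion_of_subset n (subset_iUnion₂_of_subset k (Finset.mem_range.2 hk_lt) ?_)
  rw [div_eq_mul_inv (k : ℝ)]

lemma measureReal_fatCantor_inter_Ioc_lt {a b : ℝ} (ha : 0 ≤ a) (hab : a < b) (hb : b ≤ 1) :
    volume.real (fatCantor ∩ Ioc a b) < 2 * sin ((b - a) / 2) := by
  obtain ⟨c, r, hgap, hr⟩ := exists_ball_subset_dyadicGaps_inter_Ioo ha hab hb
  have hr0 : 0 ≤ r := by nlinarith [pow_pos (sub_pos.2 hab) 3]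
  have hsub : fatCantor ∩ Ioc a b ⊆ Ioc a b \ ball c r :=
    fun t ht => ⟨ht.2, fun htc => ht.1.2 (hgap htc).1⟩
  have hsin := sin_gt_sub_cube (half_pos (sub_pos.2 hab))
  have hfin : volume (Ioc a b) ≠ ⊤ := measure_Ioc_lt_top.ne
  calc volume.real (fatCantor ∩ Ioc a b) ≤ volume.real (Ioc a b \ ball c r) :=
        measureReal_mono hsub (measure_ne_top_of_subset sdiff_subset hfin)
    _ = (b - a) - 2 * r := by
        rw [measureReal_sdiff ((hgap.trans inter_subset_right).trans Ioo_subset_Ioc_self)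
          measurableSet_ball hfin, Real.volume_real_Ioc_of_le hab.le, Real.volume_real_ball hr0]
    _ < 2 * sin ((b - a) / 2) := by nlinarith

lemma abs_indicatorPrimitive_fatCantor_sub_lt {x y : ℝ} (hx : x ∈ Icc (0 : ℝ) 1)
    (hy : y ∈ Icc (0 : ℝ) 1) (hxy : x ≠ y) :
    |indicatorPrimitive fatCantor x - indicatorPrimitive fatCantor y| < circleDist x y := by
  have hdist : |x - y| ≤ 2 * π := by
    rw [abs_le]; constructor <;> linarith [hx.1, hx.2, hy.1, hy.2, pi_gt_three]
  rw [abs_indicatorPrimitive_sub measurableSet_fatCantor, uIoc, circleDist_eq hdist,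
    ← max_sub_min_eq_abs']
  exact measureReal_fatCantor_inter_Ioc_lt (le_min hx.1 hy.1) (min_lt_max.2 hxy)
    (max_le hx.2 hy.2)

lemma exists_mem_tendsto_measure_inter_closedBall_div {α : Type*} [MetricSpace α]
    [SecondCountableTopology α] [HasBesicovitchCovering α] [MeasurableSpace α] [BorelSpace α]
    {μ : Measure α} [IsLocallyFiniteMeasure μ] {s : Set α} (hs : MeasurableSet s)
    (hμs : 0 < μ s) :
    ∃ x ∈ s, Tendsto (fun r => μ (s ∩ closedBall x r) / μ (closedBall x r)) (𝓝[>] 0)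
      (𝓝 1) := by
  have : (ae (μ.restrict s)).NeBot :=
    ae_neBot.2 (by rw [Ne, Measure.restrict_eq_zero]; exact hμs.ne')
  exact ((ae_restrict_mem hs).and (Besicovitch.ae_tendsto_measure_inter_div μ s)).exists

lemma eventually_lt_div_circleDist {s : Set ℝ} (hs : MeasurableSet s) {x c : ℝ}
    (hx : Tendsto (fun r => volume (s ∩ closedBall x r) / volume (closedBall x r)) (𝓝[>] 0)
      (𝓝 1))
    (hc : c < 1) :
    ∀ᶠ r in 𝓝[>] 0, c < |indicatorPrimitive s (x - r) - indicatorPrimitive s (x + r)| /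
      circleDist (x - r) (x + r) := by
  filter_upwards [hx.eventually (lt_mem_nhds (ENNReal.ofReal_lt_one.2 hc)),
    Ioo_mem_nhdsGT pi_pos] with r hr hrpos
  obtain ⟨hr0, hrπ⟩ := hrpos
  have hmass : c * (2 * r) < volume.real (s ∩ Ioc (x - r) (x + r)) := by
    have hfin : volume (s ∩ Ioc (x - r) (x + r)) ≠ ⊤ :=
      measure_ne_top_of_subset inter_subset_right measure_Ioc_lt_top.ne
    have h := ENNReal.mul_lt_of_lt_div hr
    rw [Real.volume_closedBall, ← ENNReal.ofReal_mul' (by positivity), Real.closedBall_eq_Icc,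
      ← measure_congr ((ae_eq_refl s).inter Ioc_ae_eq_Icc), ← ofReal_measureReal hfin] at h
    exact (ENNReal.ofReal_lt_ofReal_iff'.1 h).1
  have h2r : |x - r - (x + r)| = 2 * r := by
    rw [show x - r - (x + r) = -(2 * r) by ring, abs_neg, abs_of_pos (by positivity)]
  have hdist : circleDist (x - r) (x + r) = 2 * sin r := by
    rw [circleDist_eq (by rw [h2r]; linarith), h2r, mul_div_cancel_left₀ _ two_ne_zero]
  rw [abs_indicatorPrimitive_sub hs, uIoc_of_le (by linarith), hdist]
  have hsin : 0 < 2 * sin r := mul_pos two_pos (sin_pos_of_pos_of_lt_pi hr0 hrπ)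
  calc c < volume.real (s ∩ Ioc (x - r) (x + r)) / (2 * r) :=
        (lt_div_iff₀ (by positivity)).2 hmass
    _ ≤ volume.real (s ∩ Ioc (x - r) (x + r)) / (2 * sin r) :=
        div_le_div_of_nonneg_left measureReal_nonneg hsin (by linarith [sin_le hr0.le])

end

/-- There exists a compact set `C ⊆ (0,1)` of positive Lebesgue measure such that
`f x = ∫₀ˣ 1_C` satisfies `|f x - f y| < d x y` for all `x ≠ y` in `[0,1]`, yet the
supremum of the ratios `|f x - f y| / d x y` equals `1`, where
`d x y = √(2(1 - cos(x - y)))` is the circle metric on `[0,1]`. -/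
theorem stmt_0 :
    ∃ C : Set ℝ, IsCompact C ∧ C ⊆ Set.Ioo (0 : ℝ) 1 ∧ 0 < volume C ∧
      (∀ x ∈ Set.Icc (0 : ℝ) 1, ∀ y ∈ Set.Icc (0 : ℝ) 1, x ≠ y →
        |(∫ t in (0 : ℝ)..x, C.indicator (fun _ => (1 : ℝ)) t) -
            (∫ t in (0 : ℝ)..y, C.indicator (fun _ => (1 : ℝ)) t)| <
          Real.sqrt (2 * (1 - Real.cos (x - y)))) ∧
      IsLUB {r : ℝ | ∃ x ∈ Set.Icc (0 : ℝ) 1, ∃ y ∈ Set.Icc (0 : ℝ) 1, x ≠ y ∧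
          r = |(∫ t in (0 : ℝ)..x, C.indicator (fun _ => (1 : ℝ)) t) -
                (∫ t in (0 : ℝ)..y, C.indicator (fun _ => (1 : ℝ)) t)| /
              Real.sqrt (2 * (1 - Real.cos (x - y)))} 1 := by
  refine ⟨fatCantor, isCompact_fatCantor,
    fatCantor_subset_Icc.trans (Icc_subset_Ioo (by norm_num) (by norm_num)),
    volume_fatCantor_pos, fun x hx y hy => abs_indicatorPrimitive_fatCantor_sub_lt hx hy, ?_, ?_⟩
  · rintro _ ⟨x, hx, y, hy, hxy, rfl⟩
    have h := abs_indicatorPrimitive_fatCantor_sub_lt hx hy hxy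
    exact ((div_lt_one ((abs_nonneg _).trans_lt h)).2 h).le
  · refine fun b hb => le_of_forall_lt fun c hc => ?_
    obtain ⟨x, hxC, hx⟩ := exists_mem_tendsto_measure_inter_closedBall_div
      measurableSet_fatCantor volume_fatCantor_pos
    obtain ⟨r, hcr, hr0, hr⟩ :=
      ((eventually_lt_div_circleDist measurableSet_fatCantor hx hc).and
        (Ioo_mem_nhdsGT (by norm_num : (0 : ℝ) < 1 / 8))).exists
    obtain ⟨hx_lo, hx_hi⟩ := fatCantor_subset_Icc hxC
    exact hcr.trans_le (hb ⟨x - r, ⟨by linarith, by linarith⟩, x + r,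
      ⟨by linarith, by linarith⟩, by linarith, rfl⟩)
end

section
/- The unit circle 𝕋 is Gromov concave: for every pair of distinct points x, y ∈ 𝕋 there exists ε > 0 such that (x,y)_z ≥ ε·min{d(x,z), d(y,z)} for every z ∈ 𝕋 \ {x,y}. Equivalently, every pair of distinct points of 𝕋 fails property (Z). -/
/-!
For three points on the unit circle with `a = d(x,z)`, `b = d(y,z)`, `c = d(x,y)`, the inscribed
angle at `z` has cosine `±√(1 - c²/4)`, so the law of cosines gives
`(a² + b² - c²)² = a²b²(4 - c²)`. This identity forces `(a + b)² - c² ≥ abc²/4`, and since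
`max(a,b) ≥ c/2` and all distances are at most `2`, `a + b - c ≥ c³/48 · min(a,b)`;
so `ε = d(x,y)³/96` works.
-/

lemma sq_law_cos_of_norm_eq_one {x y z : ℂ} (hx : ‖x‖ = 1) (hy : ‖y‖ = 1) (hz : ‖z‖ = 1) :
    (dist x z ^ 2 + dist y z ^ 2 - dist x y ^ 2) ^ 2 =
      dist x z ^ 2 * dist y z ^ 2 * (4 - dist x y ^ 2) := by
  have hx0 : x ≠ 0 := norm_ne_zero_iff.mp (by simp [hx])
  have hy0 : y ≠ 0 := norm_ne_zero_iff.mp (by simp [hy])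
  have hz0 : z ≠ 0 := norm_ne_zero_iff.mp (by simp [hz])
  simp only [Complex.dist_eq]
  apply Complex.ofReal_injective
  push_cast
  -- on the unit circle `conj w = w⁻¹`, which turns the claim into a rational identity
  simp only [← Complex.mul_conj', map_sub, ← Complex.inv_eq_conj hx, ← Complex.inv_eq_conj hy,
    ← Complex.inv_eq_conj hz]
  field_simp
  ring

lemma mul_mul_sq_div_four_le_of_sq_law_cos {a b c : ℝ} (ha : 0 ≤ a) (hb : 0 ≤ b)
    (h : (a ^ 2 + b ^ 2 - c ^ 2) ^ 2 = a ^ 2 * b ^ 2 * (4 - c ^ 2)) :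
    a * b * c ^ 2 / 4 ≤ (a + b) ^ 2 - c ^ 2 := by
  set s := (a + b) ^ 2 - c ^ 2
  -- `h` is equivalent to `s (4ab - s) = a²b²c²`
  have hs_sq : a * b * (4 * s - a * b * c ^ 2) = s ^ 2 := by linear_combination -h
  rcases (mul_nonneg ha hb).eq_or_lt with hab | hab
  · rw [← hab, zero_mul, eq_comm, sq_eq_zero_iff] at hs_sq
    rw [← hab, hs_sq]
    simp
  · have := nonneg_of_mul_nonneg_right (hs_sq ▸ sq_nonneg s) hab
    linarith

lemma min_mul_le_add_sub_of_sq_law_cos {a b c : ℝ} (ha : 0 ≤ a) (hb : 0 ≤ b) (ha2 : a ≤ 2)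
    (hb2 : b ≤ 2) (hc2 : c ≤ 2) (habc : c ≤ a + b)
    (h : (a ^ 2 + b ^ 2 - c ^ 2) ^ 2 = a ^ 2 * b ^ 2 * (4 - c ^ 2)) :
    c ^ 3 / 48 * min a b ≤ a + b - c := by
  have hsq := mul_mul_sq_div_four_le_of_sq_law_cos ha hb h
  have hmin : c / 2 * min a b ≤ a * b := by
    rcases le_total a b with hab | hab
    · rw [min_eq_left hab]; nlinarith
    · rw [min_eq_right hab]; nlinarith
  have hprod : c ^ 3 / 8 * min a b ≤ (a + b - c) * (a + b + c) := by
    nlinarith [sq_nonneg c]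
  nlinarith

lemma dist_le_two_of_norm_eq_one {u v : ℂ} (hu : ‖u‖ = 1) (hv : ‖v‖ = 1) : dist u v ≤ 2 := by
  rw [dist_eq_norm]
  linarith [norm_sub_le u v]

/-- The unit circle `𝕋 ⊆ ℂ` with the inherited Euclidean metric is Gromov concave: for every
pair of distinct points `x, y` there is `ε > 0` such that the Gromov product
`(x,y)_z = (d(x,z) + d(y,z) - d(x,y))/2` satisfies `(x,y)_z ≥ ε · min(d(x,z), d(y,z))` for
every `z ∈ 𝕋 \ {x,y}`; i.e. every pair of distinct points fails property (Z). -/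
theorem stmt_2 (x y : ↥(Metric.sphere (0 : ℂ) 1)) (hxy : x ≠ y) :
    ∃ ε > (0 : ℝ), ∀ z : ↥(Metric.sphere (0 : ℂ) 1), z ≠ x → z ≠ y →
      ε * min (dist x z) (dist y z) ≤ (dist x z + dist y z - dist x y) / 2 := by
  have hxy_pos := dist_pos.mpr hxy
  refine ⟨dist x y ^ 3 / 96, by positivity, fun z _ _ => ?_⟩
  have hx := mem_sphere_zero_iff_norm.mp x.2
  have hy := mem_sphere_zero_iff_norm.mp y.2
  have hz := mem_sphere_zero_iff_norm.mp z.2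
  have := min_mul_le_add_sub_of_sq_law_cos dist_nonneg dist_nonneg
    (dist_le_two_of_norm_eq_one hx hz) (dist_le_two_of_norm_eq_one hy hz)
    (dist_le_two_of_norm_eq_one hx hy) (dist_triangle_right x y z)
    (sq_law_cos_of_norm_eq_one hx hy hz)
  simp only [Subtype.dist_eq]
  linarith
end

section
/- Let M be a complete metric space and let p, q ∈ M with p ≠ q. Then at least one of the following holds: (1) there exist x, y ∈ M with x ≠ y, d(p,q) = d(p,x) + d(x,y) + d(y,q), and metric segment [x,y] = {x,y}; or (2) there is a map φ : [0, d(p,q)] → M with d(φ(s),φ(t)) = |s−t| for all s,t, φ(0) = p and φ(d(p,q)) = q (an isometric embedding of the interval joining p to q). -/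
/-!
Call a set `K` *aligned* (between `p` and `q`) if it lies in the metric segment `[p, q]` and
`z ↦ d(p, z)` is isometric on it. By Zorn's lemma `{p, q}` lies in a maximal aligned set `K`;
maximality forces `K` to be closed, so by completeness its image `A ⊆ [0, d(p, q)]` is closed.
If `A` is the whole interval, inverting `d(p, ·)` on `K` gives the isometric embedding. Otherwise
`A` has a gap `(d(p, x), d(p, y))` with `x, y ∈ K`, and any point of `[x, y]` could be added
to `K`; by maximality it already lies in `K`, so by the gap it is `x` or `y`: `[x, y] = {x, y}`.
-/

open Set Function

section Order

variable {α : Type*} [ConditionallyCompleteLinearOrder α] [TopologicalSpace α] [OrderTopology α]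

theorem exists_gap_of_isClosed {A : Set α} {a b : α} (hA : IsClosed A) (ha : a ∈ A)
    (hb : b ∈ A) (hab : ¬ Icc a b ⊆ A) :
    ∃ x ∈ A, ∃ y ∈ A, x < y ∧ ∀ c ∈ A, c ≤ x ∨ y ≤ c := by
  obtain ⟨r, hr, hrA⟩ := not_subset.1 hab
  have hbelow : BddAbove (A ∩ Iic r) := ⟨r, fun _ hc => hc.2⟩
  have habove : BddBelow (A ∩ Ici r) := ⟨r, fun _ hc => hc.2⟩
  have hx := (hA.inter isClosed_Iic).csSup_mem ⟨a, ha, hr.1⟩ hbelow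
  have hy := (hA.inter isClosed_Ici).csInf_mem ⟨b, hb, hr.2⟩ habove
  have hxr : sSup (A ∩ Iic r) < r := hx.2.lt_of_ne fun h => hrA (h ▸ hx.1)
  have hry : r < sInf (A ∩ Ici r) := hy.2.lt_of_ne' fun h => hrA (h ▸ hy.1)
  refine ⟨_, hx.1, _, hy.1, hxr.trans hry, fun c hc => ?_⟩
  rcases le_total c r with h | h
  · exact Or.inl (le_csSup hbelow ⟨hc, h⟩)
  · exact Or.inr (csInf_le habove ⟨hc, h⟩)

end Order

section Aligned

variable {M : Type*}

def IsAlignedSet [PseudoMetricSpace M] (p q : M) (K : Set M) : Prop :=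
  (∀ z ∈ K, dist p z + dist z q = dist p q) ∧
    ∀ z ∈ K, ∀ w ∈ K, dist z w = |dist p z - dist p w|

section Pseudo

variable [PseudoMetricSpace M] {p q : M} {K : Set M}

theorem isAlignedSet_pair (p q : M) : IsAlignedSet p q {p, q} := by
  refine ⟨?_, ?_⟩
  · rintro z (rfl | rfl) <;> simp [dist_comm]
  · rintro z (rfl | rfl) w (rfl | rfl) <;> simp [dist_comm]

theorem isAlignedSet_sUnion {c : Set (Set M)} (hc : IsChain (· ⊆ ·) c)
    (h : ∀ K ∈ c, IsAlignedSet p q K) : IsAlignedSet p q (⋃₀ c) := by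
  refine ⟨fun z ⟨K, hK, hz⟩ => (h K hK).1 z hz, ?_⟩
  rintro z ⟨K, hK, hz⟩ w ⟨L, hL, hw⟩
  rcases hc.total hK hL with hKL | hLK
  · exact (h L hL).2 z (hKL hz) w hw
  · exact (h K hK).2 z hz w (hLK hw)

theorem exists_maximal_isAlignedSet (p q : M) :
    ∃ K, {p, q} ⊆ K ∧ Maximal (IsAlignedSet p q) K :=
  zorn_subset_nonempty {K | IsAlignedSet p q K}
    (fun c hc hchain _ =>
      ⟨⋃₀ c, isAlignedSet_sUnion hchain hc, fun _ => subset_sUnion_of_mem⟩)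
    _ (isAlignedSet_pair p q)

theorem IsAlignedSet.closure (hK : IsAlignedSet p q K) : IsAlignedSet p q (_root_.closure K) := by
  refine ⟨fun z hz => ?_, fun z hz w hw => ?_⟩
  · refine closure_minimal hK.1 (isClosed_eq ?_ continuous_const) hz
    fun_prop
  · have hprod : _root_.closure K ×ˢ _root_.closure K ⊆
        {zw : M × M | dist zw.1 zw.2 = |dist p zw.1 - dist p zw.2|} := by
      rw [← closure_prod_eq]
      refine closure_minimal (fun zw hzw => hK.2 _ hzw.1 _ hzw.2) (isClosed_eq ?_ ?_) <;> fun_prop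
    exact hprod (mk_mem_prod hz hw)

theorem Maximal.isClosed_of_isAlignedSet (hK : Maximal (IsAlignedSet p q) K) : IsClosed K :=
  isClosed_of_closure_subset (hK.2 hK.1.closure subset_closure)

theorem IsAlignedSet.isClosed_image (hK : IsAlignedSet p q K) (hc : IsComplete K) :
    IsClosed (dist p '' K) := by
  have : CompleteSpace K := hc.completeSpace_coe
  have hiso : Isometry (K.domRestrict (dist p)) :=
    Isometry.of_dist_eq fun z w => (Real.dist_eq _ _).trans (hK.2 z z.2 w w.2).symm
  rw [← range_domRestrict]
  exact hiso.isUniformInducing.isComplete_range.isClosed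

theorem IsAlignedSet.dist_eq_add_of_mem_segment (hK : IsAlignedSet p q K) {x y z : M}
    (hx : x ∈ K) (hy : y ∈ K) (hxy : dist p x ≤ dist p y)
    (hz : dist x z + dist z y = dist x y) :
    dist p z = dist p x + dist x z ∧ dist z y = dist p y - dist p z := by
  have hxy' : dist x y = dist p y - dist p x := by
    rw [hK.2 x hx y hy, abs_sub_comm, abs_of_nonneg (by linarith)]
  have := hK.1 y hy
  constructor <;> linarith [dist_triangle p x z, dist_triangle p z q, dist_triangle z y q]

theorem IsAlignedSet.insert_of_mem_segment (hK : IsAlignedSet p q K) {x y z : M}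
    (hx : x ∈ K) (hy : y ∈ K) (hxy : dist p x ≤ dist p y)
    (hgap : ∀ w ∈ K, dist p w ≤ dist p x ∨ dist p y ≤ dist p w)
    (hz : dist x z + dist z y = dist x y) : IsAlignedSet p q (insert z K) := by
  obtain ⟨hpz, hzy⟩ := hK.dist_eq_add_of_mem_segment hx hy hxy hz
  have hzw : ∀ w ∈ K, dist z w = |dist p z - dist p w| := by
    intro w hw
    refine le_antisymm ?_ (by simpa only [dist_comm p] using abs_dist_sub_le z w p)
    rcases hgap w hw with hwx | hyw
    · have hxw := hK.2 x hx w hw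
      rw [abs_of_nonneg (by linarith)] at hxw
      rw [abs_of_nonneg (by linarith [dist_nonneg (x := x) (y := z)])]
      linarith [dist_triangle z x w, dist_comm x z]
    · have hyw' := hK.2 y hy w hw
      rw [abs_of_nonpos (by linarith)] at hyw'
      rw [abs_of_nonpos (by linarith [dist_nonneg (x := z) (y := y)])]
      linarith [dist_triangle z y w]
  have hzq : dist p z + dist z q = dist p q := by
    have := hK.1 y hy
    linarith [dist_triangle p z q, dist_triangle z y q]
  refine ⟨?_, ?_⟩
  · rintro w (rfl | hw)
    exacts [hzq, hK.1 w hw]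
  · rintro w (rfl | hw) w' (rfl | hw')
    · simp
    · exact hzw w' hw'
    · rw [dist_comm, hzw w hw, abs_sub_comm]
    · exact hK.2 w hw w' hw'

end Pseudo

variable [MetricSpace M] {p q : M} {K : Set M}

theorem Maximal.segment_eq_pair_of_gap (hK : Maximal (IsAlignedSet p q) K) {x y : M}
    (hx : x ∈ K) (hy : y ∈ K) (hxy : dist p x < dist p y)
    (hgap : ∀ w ∈ K, dist p w ≤ dist p x ∨ dist p y ≤ dist p w) :
    {z : M | dist x z + dist z y = dist x y} = {x, y} := by
  refine Subset.antisymm (fun z hz => ?_) ?_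
  · have hzK : z ∈ K := hK.2 (hK.1.insert_of_mem_segment hx hy hxy.le hgap hz)
      (subset_insert z K) (mem_insert z K)
    obtain ⟨hpz, hzy⟩ := hK.1.dist_eq_add_of_mem_segment hx hy hxy.le hz
    rcases hgap z hzK with h | h
    · exact Or.inl (dist_le_zero.1 (by linarith)).symm
    · exact Or.inr (dist_le_zero.1 (by linarith))
  · rintro z (rfl | rfl) <;> simp [dist_comm]

theorem IsAlignedSet.exists_isometry_Icc (hK : IsAlignedSet p q K)
    (hI : Icc 0 (dist p q) ⊆ dist p '' K) :
    ∃ φ : ℝ → M,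
      (∀ s ∈ Icc 0 (dist p q), ∀ t ∈ Icc 0 (dist p q), dist (φ s) (φ t) = |s - t|) ∧
      φ 0 = p ∧ φ (dist p q) = q := by
  have : Nonempty M := ⟨p⟩
  have hφ : ∀ s ∈ Icc 0 (dist p q),
      invFunOn (dist p) K s ∈ K ∧ dist p (invFunOn (dist p) K s) = s :=
    fun s hs => invFunOn_pos (hI hs)
  have h0 := hφ 0 ⟨le_rfl, dist_nonneg⟩
  have hD := hφ (dist p q) ⟨dist_nonneg, le_rfl⟩
  refine ⟨invFunOn (dist p) K, fun s hs t ht => ?_, (dist_eq_zero.1 h0.2).symm, ?_⟩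
  · rw [hK.2 _ (hφ s hs).1 _ (hφ t ht).1, (hφ s hs).2, (hφ t ht).2]
  · have := hK.1 _ hD.1
    exact dist_le_zero.1 (by linarith [hD.2])

end Aligned

theorem stmt_6_general {M : Type*} [MetricSpace M] [CompleteSpace M] (p q : M) :
    (∃ x y : M, x ≠ y ∧ dist p q = dist p x + dist x y + dist y q ∧
      {z : M | dist x z + dist z y = dist x y} = {x, y}) ∨
    (∃ φ : ℝ → M, (∀ s ∈ Set.Icc (0 : ℝ) (dist p q), ∀ t ∈ Set.Icc (0 : ℝ) (dist p q),
        dist (φ s) (φ t) = |s - t|) ∧ φ 0 = p ∧ φ (dist p q) = q) := by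
  obtain ⟨K, hpqK, hK⟩ := exists_maximal_isAlignedSet p q
  by_cases hI : Icc 0 (dist p q) ⊆ dist p '' K
  · exact Or.inr (hK.1.exists_isometry_Icc hI)
  left
  have hA := hK.1.isClosed_image hK.isClosed_of_isAlignedSet.isComplete
  obtain ⟨_, ⟨x, hx, rfl⟩, _, ⟨y, hy, rfl⟩, hxy, hgap⟩ :=
    exists_gap_of_isClosed hA ⟨p, hpqK (mem_insert p _), dist_self p⟩
      ⟨q, hpqK (mem_insert_of_mem p rfl), rfl⟩ hI
  rw [forall_mem_image] at hgap
  refine ⟨x, y, ne_of_apply_ne (dist p) hxy.ne, ?_, hK.segment_eq_pair_of_gap hx hy hxy hgap⟩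
  have := hK.1.1 y hy
  rw [hK.1.2 x hx y hy, abs_sub_comm, abs_of_pos (sub_pos.2 hxy)]
  linarith

/-- Dichotomy in a complete metric space: for `p ≠ q`, either there are `x ≠ y` lying on a
metric segment between `p` and `q` (i.e. `d(p,q) = d(p,x) + d(x,y) + d(y,q)`) whose metric
segment `[x,y] = {z : d(x,z) + d(z,y) = d(x,y)}` is trivial (`= {x,y}`), or there is an
isometric embedding `φ : [0, d(p,q)] → M` with `φ(0) = p` and `φ(d(p,q)) = q`. -/
theorem stmt_6 {M : Type*} [MetricSpace M] [CompleteSpace M] (p q : M) (hpq : p ≠ q) :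
    (∃ x y : M, x ≠ y ∧ dist p q = dist p x + dist x y + dist y q ∧
      {z : M | dist x z + dist z y = dist x y} = {x, y}) ∨
    (∃ φ : ℝ → M, (∀ s ∈ Set.Icc (0 : ℝ) (dist p q), ∀ t ∈ Set.Icc (0 : ℝ) (dist p q),
        dist (φ s) (φ t) = |s - t|) ∧ φ 0 = p ∧ φ (dist p q) = q) :=
  stmt_6_general p q
end

section
/- Let M be a complete metric space containing no isometric copy of a nondegenerate interval (there is no L > 0 and no map φ : [0,L] → M with d(φ(s),φ(t)) = |s−t| for all s,t), and let Y be a Banach space. Then a Lipschitz map f : M → Y strongly attains its norm if and only if there exist x ≠ y in M with ‖f(x)−f(y)‖ = ‖f‖_L·d(x,y) and metric segment [x,y] = {x,y}. -/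
/-! Attainment at `(x, y)` passes to `(x, z)` and `(z, y)` for every `z` in the metric segment
`[x, y]`, by the triangle inequality in `Y`; so it suffices to find `u ≠ v` with `u ∈ [x, v]`,
`v ∈ [x, y]` and `[u, v] = {u, v}`.

The relation `u ∈ [x, v]` is a partial order on `M`. Take a maximal chain `C` containing `x` and
`y`. On a chain `dist x` is an isometry, and a maximal chain is closed, so by completeness `dist x`
maps `C ∩ [x, y]` onto a closed subset `S` of `[0, d(x, y)]`. As `M` contains no isometric copy of
an interval, `S` misses a point of `[0, d(x, y)]` and therefore has a gap `(d(x, u), d(x, v))` with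
`u, v ∈ C`. Any `z ∈ [u, v]` could be added to `C`, so `z ∈ C` by maximality, and then the gap
forces `z ∈ {u, v}`. -/

/-- The least Lipschitz constant of a map between a metric space and a normed space,
defined as the supremum of the difference quotients. -/
noncomputable def lipNorm {M : Type*} [MetricSpace M] {Y : Type*} [NormedAddCommGroup Y]
    (f : M → Y) : ℝ :=
  sSup {r : ℝ | ∃ x y : M, x ≠ y ∧ r = ‖f x - f y‖ / dist x y}

/-- `f` is a Lipschitz map. -/
def IsLip {M : Type*} [MetricSpace M] {Y : Type*} [NormedAddCommGroup Y] (f : M → Y) : Prop :=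
  ∃ K : NNReal, LipschitzWith K f

/-- `f` strongly attains its norm. -/
def StronglyAttains {M : Type*} [MetricSpace M] {Y : Type*} [NormedAddCommGroup Y]
    (f : M → Y) : Prop :=
  ∃ x y : M, x ≠ y ∧ ‖f x - f y‖ = lipNorm f * dist x y

open Set

section MetricBtw

variable {M : Type*} [MetricSpace M]

def MetricBtw (x u v : M) : Prop := dist x u + dist u v = dist x v

variable {x u v w z : M}

theorem metricBtw_self_left (x u : M) : MetricBtw x x u := by simp [MetricBtw]

theorem metricBtw_self_right (x u : M) : MetricBtw x u u := by simp [MetricBtw]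

instance (x : M) : Std.Refl (MetricBtw x) := ⟨metricBtw_self_right x⟩

theorem MetricBtw.trans (huv : MetricBtw x u v) (hvw : MetricBtw x v w) : MetricBtw x u w := by
  unfold MetricBtw at *
  linarith [dist_triangle x u w, dist_triangle u v w]

theorem MetricBtw.antisymm (huv : MetricBtw x u v) (hvu : MetricBtw x v u) : u = v := by
  unfold MetricBtw at *
  exact dist_eq_zero.mp (le_antisymm (by linarith [dist_comm u v, dist_nonneg (x := v) (y := u)])
    dist_nonneg)

theorem MetricBtw.split (huv : MetricBtw x u v) (hz : MetricBtw u z v) :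
    MetricBtw x u z ∧ MetricBtw x z v := by
  unfold MetricBtw at *
  constructor <;> linarith [dist_triangle x u z, dist_triangle x z v]

theorem isClosed_setOf_metricBtw (x : M) : IsClosed {p : M × M | MetricBtw x p.1 p.2} :=
  isClosed_eq (by fun_prop) (by fun_prop)

theorem IsChain.dist_eq_abs_sub {C : Set M} (hC : IsChain (MetricBtw x) C) (hu : u ∈ C)
    (hv : v ∈ C) : dist u v = |dist x u - dist x v| := by
  rcases hC.total hu hv with h | h <;> unfold MetricBtw at h
  · rw [abs_sub_comm, abs_of_nonneg (by linarith [dist_nonneg (x := u) (y := v)])]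
    linarith
  · rw [abs_of_nonneg (by linarith [dist_nonneg (x := v) (y := u)]), dist_comm]
    linarith

theorem IsChain.metricBtw_of_dist_le {C : Set M} (hC : IsChain (MetricBtw x) C) (hu : u ∈ C)
    (hv : v ∈ C) (h : dist x u ≤ dist x v) : MetricBtw x u v := by
  rcases hC.total hu hv with huv | hvu
  · exact huv
  · have : dist v u = 0 := le_antisymm (by unfold MetricBtw at hvu; linarith) dist_nonneg
    rw [dist_eq_zero.mp this]
    exact metricBtw_self_right x u

theorem IsChain.isClosed_image_dist [CompleteSpace M] {C : Set M} (hC : IsChain (MetricBtw x) C)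
    (hCc : IsClosed C) : IsClosed (dist x '' C) := by
  have : CompleteSpace C := hCc.completeSpace_coe
  have hiso : Isometry (C.domRestrict (dist x)) := Isometry.of_dist_eq fun u v => by
    rw [Subtype.dist_eq, hC.dist_eq_abs_sub u.2 v.2, Real.dist_eq]
    rfl
  rw [← range_domRestrict]
  exact hiso.isClosedEmbedding.isClosed_range

end MetricBtw

theorem IsChain.closure {α : Type*} [TopologicalSpace α] [T2Space α] {r : α → α → Prop}
    {s : Set α} (hr : IsClosed {p : α × α | r p.1 p.2}) (hs : IsChain r s) :
    IsChain r (closure s) := by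
  set T : Set (α × α) := {p | p.1 = p.2 ∨ r p.1 p.2 ∨ r p.2 p.1}
  have hT : IsClosed T := isClosed_diagonal.union (hr.union (hr.preimage continuous_swap))
  have hsT : s ×ˢ s ⊆ T := fun p ⟨h1, h2⟩ => or_iff_not_imp_left.mpr (hs h1 h2)
  intro a ha b hb hab
  have hab' : (a, b) ∈ _root_.closure (s ×ˢ s) := by rw [closure_prod_eq]; exact mk_mem_prod ha hb
  exact (closure_minimal hsT hT hab').resolve_left hab

theorem IsMaxChain.isClosed {α : Type*} [TopologicalSpace α] [T2Space α] {r : α → α → Prop}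
    {s : Set α} (hr : IsClosed {p : α × α | r p.1 p.2}) (hs : IsMaxChain r s) : IsClosed s :=
  closure_eq_iff_isClosed.mp (hs.2 (hs.1.closure hr) subset_closure).symm

theorem IsClosed.exists_gap {S : Set ℝ} (hS : IsClosed S) {a b t : ℝ} (ha : a ∈ S) (hb : b ∈ S)
    (hat : a ≤ t) (htb : t ≤ b) (ht : t ∉ S) :
    ∃ a' ∈ S, ∃ b' ∈ S, a' < b' ∧ ∀ s ∈ S, s ≤ a' ∨ b' ≤ s := by
  have hbddA : BddAbove (S ∩ Iic t) := ⟨t, fun r hr => hr.2⟩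
  have hbddB : BddBelow (S ∩ Ici t) := ⟨t, fun r hr => hr.2⟩
  obtain ⟨hA, hAt⟩ := (hS.inter isClosed_Iic).csSup_mem ⟨a, ha, hat⟩ hbddA
  obtain ⟨hB, hBt⟩ := (hS.inter isClosed_Ici).csInf_mem ⟨b, hb, htb⟩ hbddB
  refine ⟨_, hA, _, hB, ?_, fun s hs => ?_⟩
  · exact (hAt.lt_of_ne (ne_of_mem_of_not_mem hA ht)).trans_le
      (hBt.lt_of_ne (ne_of_mem_of_not_mem hB ht).symm).le
  · rcases le_total s t with h | h
    · exact .inl (le_csSup hbddA ⟨hs, h⟩)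
    · exact .inr (csInf_le hbddB ⟨hs, h⟩)

section MaxChain

variable {M : Type*} [MetricSpace M] {x y u v : M}

theorem IsChain.exists_isometry_Icc {C : Set M} (hC : IsChain (MetricBtw x) C) {L : ℝ}
    (hL : Icc 0 L ⊆ dist x '' C) :
    ∃ φ : ℝ → M, ∀ s ∈ Icc 0 L, ∀ t ∈ Icc 0 L, dist (φ s) (φ t) = |s - t| := by
  have : Nonempty M := ⟨x⟩
  refine ⟨Function.invFunOn (dist x) C, fun s hs t ht => ?_⟩
  obtain ⟨hsC, hsx⟩ := Function.invFunOn_pos (hL hs)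
  obtain ⟨htC, htx⟩ := Function.invFunOn_pos (hL ht)
  rw [hC.dist_eq_abs_sub hsC htC, hsx, htx]

theorem IsMaxChain.exists_gap [CompleteSpace M]
    (hM : ¬ ∃ (L : ℝ) (φ : ℝ → M), 0 < L ∧
      ∀ s ∈ Icc (0 : ℝ) L, ∀ t ∈ Icc (0 : ℝ) L, dist (φ s) (φ t) = |s - t|)
    {C : Set M} (hC : IsMaxChain (MetricBtw x) C) (hx : x ∈ C) (hy : y ∈ C) (hxy : x ≠ y) :
    ∃ u ∈ C, ∃ v ∈ C, u ≠ v ∧ MetricBtw x u v ∧ MetricBtw x v y ∧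
      ∀ c ∈ C, MetricBtw x c u ∨ MetricBtw x v c := by
  set D := C ∩ {z | MetricBtw x z y}
  have hDc : IsClosed D := (hC.isClosed (isClosed_setOf_metricBtw x)).inter
    ((isClosed_setOf_metricBtw x).preimage (continuous_id.prodMk continuous_const))
  have hD : IsChain (MetricBtw x) D := hC.1.mono inter_subset_left
  obtain ⟨t, ⟨ht0, htd⟩, htD⟩ : ∃ t ∈ Icc 0 (dist x y), t ∉ dist x '' D := by
    by_contra! h
    obtain ⟨φ, hφ⟩ := hD.exists_isometry_Icc h
    exact hM ⟨_, φ, dist_pos.mpr hxy, hφ⟩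
  obtain ⟨_, ⟨u, ⟨huC, -⟩, rfl⟩, _, ⟨v, ⟨hvC, hvy⟩, rfl⟩, huv, hgap⟩ :=
    (hD.isClosed_image_dist hDc).exists_gap ⟨x, ⟨hx, metricBtw_self_left x y⟩, dist_self x⟩
      ⟨y, ⟨hy, metricBtw_self_right x y⟩, rfl⟩ ht0 htd htD
  refine ⟨u, huC, v, hvC, ?_, hC.1.metricBtw_of_dist_le huC hvC huv.le, hvy, fun c hc => ?_⟩
  · rintro rfl
    exact lt_irrefl _ huv
  by_cases hcy : MetricBtw x c y
  · rcases hgap _ ⟨c, ⟨hc, hcy⟩, rfl⟩ with h | h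
    · exact .inl (hC.1.metricBtw_of_dist_le hc huC h)
    · exact .inr (hC.1.metricBtw_of_dist_le hvC hc h)
  · exact .inr (hvy.trans ((hC.1.total hy hc).resolve_right hcy))

theorem IsMaxChain.setOf_metricBtw_eq_pair {C : Set M} (hC : IsMaxChain (MetricBtw x) C)
    (hu : u ∈ C) (hv : v ∈ C) (huv : MetricBtw x u v)
    (hgap : ∀ c ∈ C, MetricBtw x c u ∨ MetricBtw x v c) :
    {z | MetricBtw u z v} = {u, v} := by
  refine Subset.antisymm (fun z hz => ?_) ?_
  · obtain ⟨huz, hzv⟩ := huv.split hz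
    have hins : IsChain (MetricBtw x) (insert z C) := hC.1.insert fun c hc _ =>
      (hgap c hc).elim (fun hcu => .inr (hcu.trans huz)) (fun hvc => .inl (hzv.trans hvc))
    have hzC : z ∈ C := (hC.2 hins (subset_insert z C)).symm ▸ mem_insert z C
    rcases hgap z hzC with hzu | hvz
    · exact .inl (hzu.antisymm huz)
    · exact .inr (hzv.antisymm hvz)
  · rintro z (rfl | rfl)
    · exact metricBtw_self_left z v
    · exact metricBtw_self_right u z

theorem exists_metricBtw_setOf_metricBtw_eq_pair [CompleteSpace M]
    (hM : ¬ ∃ (L : ℝ) (φ : ℝ → M), 0 < L ∧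
      ∀ s ∈ Icc (0 : ℝ) L, ∀ t ∈ Icc (0 : ℝ) L, dist (φ s) (φ t) = |s - t|)
    (hxy : x ≠ y) :
    ∃ u v : M, u ≠ v ∧ MetricBtw x u v ∧ MetricBtw x v y ∧ {z | MetricBtw u z v} = {u, v} := by
  obtain ⟨C, hC, hxyC⟩ := (IsChain.pair (metricBtw_self_left x y)).exists_maxChain
  obtain ⟨u, hu, v, hv, huv, hxuv, hvy, hgap⟩ :=
    hC.exists_gap hM (hxyC (mem_insert x _)) (hxyC (mem_insert_of_mem x rfl)) hxy
  exact ⟨u, v, huv, hxuv, hvy, hC.setOf_metricBtw_eq_pair hu hv hxuv hgap⟩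

end MaxChain

theorem IsLip.norm_sub_le {M : Type*} [MetricSpace M] {Y : Type*} [NormedAddCommGroup Y]
    {f : M → Y} (hf : IsLip f) (u v : M) : ‖f u - f v‖ ≤ lipNorm f * dist u v := by
  rcases eq_or_ne u v with rfl | huv
  · simp
  obtain ⟨K, hK⟩ := hf
  have hbdd : BddAbove {r : ℝ | ∃ a b : M, a ≠ b ∧ r = ‖f a - f b‖ / dist a b} := ⟨K, by
    rintro r ⟨a, b, hab, rfl⟩
    rw [div_le_iff₀ (dist_pos.mpr hab), ← dist_eq_norm]
    exact hK.dist_le_mul a b⟩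
  rw [← div_le_iff₀ (dist_pos.mpr huv)]
  exact le_csSup hbdd ⟨u, v, huv, rfl⟩

theorem MetricBtw.norm_sub_eq_mul_dist {M : Type*} [MetricSpace M] {Y : Type*}
    [SeminormedAddCommGroup Y] {f : M → Y} {K : ℝ} (hK : ∀ a b, ‖f a - f b‖ ≤ K * dist a b)
    {p z q : M} (hz : MetricBtw p z q) (h : ‖f p - f q‖ = K * dist p q) :
    ‖f p - f z‖ = K * dist p z ∧ ‖f z - f q‖ = K * dist z q := by
  have htri : ‖f p - f q‖ ≤ ‖f p - f z‖ + ‖f z - f q‖ := norm_sub_le_norm_sub_add_norm_sub _ _ _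
  have hsum : K * dist p z + K * dist z q = K * dist p q := by rw [← mul_add, hz]
  constructor <;> linarith [hK p z, hK z q]

theorem stmt_7_general {M : Type*} [MetricSpace M] [CompleteSpace M]
    (hM : ¬ ∃ (L : ℝ) (φ : ℝ → M), 0 < L ∧
      ∀ s ∈ Set.Icc (0 : ℝ) L, ∀ t ∈ Set.Icc (0 : ℝ) L, dist (φ s) (φ t) = |s - t|)
    {Y : Type*} [NormedAddCommGroup Y]
    (f : M → Y) (hf : IsLip f) :
    StronglyAttains f ↔
      ∃ x y : M, x ≠ y ∧ ‖f x - f y‖ = lipNorm f * dist x y ∧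
        {z : M | dist x z + dist z y = dist x y} = {x, y} := by
  refine ⟨fun ⟨x, y, hxy, hxy_att⟩ => ?_, fun ⟨x, y, hxy, hxy_att, _⟩ => ⟨x, y, hxy, hxy_att⟩⟩
  obtain ⟨u, v, huv, hxuv, hvy, hseg⟩ := exists_metricBtw_setOf_metricBtw_eq_pair hM hxy
  have hxv_att := (hvy.norm_sub_eq_mul_dist hf.norm_sub_le hxy_att).1
  exact ⟨u, v, huv, (hxuv.norm_sub_eq_mul_dist hf.norm_sub_le hxv_att).2, hseg⟩

/-- If the complete metric space `M` contains no isometric copy of a nondegenerate interval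
and `Y` is a Banach space, then a Lipschitz map `f : M → Y` strongly attains its norm iff it
attains it at a pair `x ≠ y` whose metric segment `[x,y]` is trivial. -/
theorem stmt_7 {M : Type*} [MetricSpace M] [CompleteSpace M]
    (hM : ¬ ∃ (L : ℝ) (φ : ℝ → M), 0 < L ∧
      ∀ s ∈ Set.Icc (0 : ℝ) L, ∀ t ∈ Set.Icc (0 : ℝ) L, dist (φ s) (φ t) = |s - t|)
    {Y : Type*} [NormedAddCommGroup Y] [NormedSpace ℝ Y] [CompleteSpace Y]
    (f : M → Y) (hf : IsLip f) :
    StronglyAttains f ↔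
      ∃ x y : M, x ≠ y ∧ ‖f x - f y‖ = lipNorm f * dist x y ∧
        {z : M | dist x z + dist z y = dist x y} = {x, y} :=
  stmt_7_general hM f hf
end

section
/- Let M be a compact metric space, Y a Banach space, and f : M → Y a non-local Lipschitz map with ‖f‖_L = 1. Then there exist x ≠ y in M such that ‖f(x)−f(y)‖ = d(x,y) and the pair (x,y) fails property (Z), i.e. there exists ε > 0 with (x,y)_z ≥ ε·min{d(x,z),d(y,z)} for every z ∈ M \ {x,y}. In particular f strongly attains its norm. -/
/-- `f` is a local map: it approximates its Lipschitz norm at arbitrarily close pairs. -/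
def IsLocalMap {M : Type*} [MetricSpace M] {Y : Type*} [NormedAddCommGroup Y]
    (f : M → Y) : Prop :=
  ∀ ε > (0 : ℝ), ∃ x y : M, x ≠ y ∧ dist x y < ε ∧
    ‖f x - f y‖ > (lipNorm f - ε) * dist x y

section LipNorm

variable {M : Type*} [MetricSpace M] {Y : Type*} [NormedAddCommGroup Y] {f : M → Y}

/-- `sSup` of an unbounded set of reals is `0`, so a nonzero `lipNorm` already forces the
difference quotients to be bounded. -/
lemma bddAbove_of_lipNorm_ne_zero (h : lipNorm f ≠ 0) :
    BddAbove {r : ℝ | ∃ x y : M, x ≠ y ∧ r = ‖f x - f y‖ / dist x y} := by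
  by_contra hb
  exact h (Real.sSup_of_not_bddAbove hb)

lemma norm_sub_le_lipNorm_mul_dist (h : lipNorm f ≠ 0) (x y : M) :
    ‖f x - f y‖ ≤ lipNorm f * dist x y := by
  rcases eq_or_ne x y with rfl | hxy
  · simp
  · rw [← div_le_iff₀ (dist_pos.2 hxy)]
    exact le_csSup (bddAbove_of_lipNorm_ne_zero h) ⟨x, y, hxy, rfl⟩

lemma exists_mul_dist_lt_norm_sub (h : lipNorm f ≠ 0) {r : ℝ} (hr : r < lipNorm f) :
    ∃ x y : M, x ≠ y ∧ r * dist x y < ‖f x - f y‖ := by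
  have hne : {r : ℝ | ∃ x y : M, x ≠ y ∧ r = ‖f x - f y‖ / dist x y}.Nonempty := by
    by_contra he
    exact h (by rw [lipNorm, Set.not_nonempty_iff_eq_empty.1 he, Real.sSup_empty])
  obtain ⟨_, ⟨x, y, hxy, rfl⟩, hlt⟩ := exists_lt_of_lt_csSup hne hr
  exact ⟨x, y, hxy, (lt_div_iff₀ (dist_pos.2 hxy)).1 hlt⟩

lemma exists_norm_sub_le_of_not_isLocalMap (h : ¬ IsLocalMap f) :
    ∃ ε > 0, ∀ x y : M, x ≠ y → dist x y < ε →
      ‖f x - f y‖ ≤ (lipNorm f - ε) * dist x y := by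
  simpa [IsLocalMap] using h

end LipNorm

/-- The Gromov product `(x,y)_z`. -/
noncomputable def gromovProduct {M : Type*} [MetricSpace M] (x y z : M) : ℝ :=
  (dist x z + dist y z - dist x y) / 2

section NonLocal

variable {M : Type*} [MetricSpace M] {Y : Type*} [NormedAddCommGroup Y] {f : M → Y} {ε : ℝ}

lemma gromovProduct_comm (x y z : M) : gromovProduct x y z = gromovProduct y x z := by
  simp only [gromovProduct, dist_comm x y, add_comm (dist x z)]

lemma continuous_gromovProduct (x y : M) : Continuous (gromovProduct x y) := by
  unfold gromovProduct
  fun_prop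

lemma norm_sub_le_dist_of_lipschitzWith_one (hf : LipschitzWith 1 f) (x y : M) :
    ‖f x - f y‖ ≤ dist x y := by
  simpa [dist_eq_norm] using hf.dist_le_mul x y

lemma le_dist_of_mul_dist_lt_norm_sub
    (hloc : ∀ x y : M, x ≠ y → dist x y < ε → ‖f x - f y‖ ≤ (1 - ε) * dist x y)
    {x y : M} (hxy : x ≠ y) (h : (1 - ε) * dist x y < ‖f x - f y‖) : ε ≤ dist x y := by
  by_contra! hlt
  exact (hloc x y hxy hlt).not_gt h

lemma exists_norm_sub_eq_dist [CompactSpace M] (hε : 0 < ε) (hf : LipschitzWith 1 f)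
    (happrox : ∀ r < 1, ∃ x y : M, x ≠ y ∧ r * dist x y < ‖f x - f y‖)
    (hloc : ∀ x y : M, x ≠ y → dist x y < ε → ‖f x - f y‖ ≤ (1 - ε) * dist x y) :
    ∃ x y : M, x ≠ y ∧ ‖f x - f y‖ = dist x y := by
  set T : Set (M × M) := {p | ε ≤ dist p.1 p.2}
  have hT : IsCompact T := (isClosed_le continuous_const continuous_dist).isCompact
  have hcont : ContinuousOn (fun p : M × M ↦ ‖f p.1 - f p.2‖ / dist p.1 p.2) T :=
    (hf.continuous.comp continuous_fst).sub (hf.continuous.comp continuous_snd)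
      |>.norm.continuousOn.div continuous_dist.continuousOn fun p hp ↦ (hε.trans_le hp).ne'
  obtain ⟨a, b, hab, hlt⟩ := happrox (1 - ε) (by linarith)
  obtain ⟨p, hpT, hpmax⟩ :=
    hT.exists_isMaxOn ⟨(a, b), le_dist_of_mul_dist_lt_norm_sub hloc hab hlt⟩ hcont
  have hp : 0 < dist p.1 p.2 := hε.trans_le hpT
  refine ⟨p.1, p.2, dist_pos.1 hp, (norm_sub_le_dist_of_lipschitzWith_one hf _ _).antisymm ?_⟩
  rw [← one_le_div₀ hp]
  refine le_of_forall_sub_le fun τ hτ ↦ ?_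
  obtain ⟨x, y, hxy, hlt⟩ := happrox (1 - min τ ε) (by linarith [lt_min hτ hε])
  have hxyT : (x, y) ∈ T := le_dist_of_mul_dist_lt_norm_sub hloc hxy <|
    (mul_le_mul_of_nonneg_right (by linarith [min_le_right τ ε]) dist_nonneg).trans_lt hlt
  calc 1 - τ ≤ 1 - min τ ε := by linarith [min_le_left τ ε]
    _ ≤ ‖f x - f y‖ / dist x y := (le_div_iff₀ (dist_pos.2 hxy)).2 hlt.le
    _ ≤ ‖f p.1 - f p.2‖ / dist p.1 p.2 := hpmax hxyT

lemma exists_norm_sub_eq_dist_minimal [CompactSpace M] (hε : 0 < ε) (hf : LipschitzWith 1 f)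
    (happrox : ∀ r < 1, ∃ x y : M, x ≠ y ∧ r * dist x y < ‖f x - f y‖)
    (hloc : ∀ x y : M, x ≠ y → dist x y < ε → ‖f x - f y‖ ≤ (1 - ε) * dist x y) :
    ∃ x y : M, x ≠ y ∧ ‖f x - f y‖ = dist x y ∧
      ∀ z, z ≠ x → ‖f x - f z‖ = dist x z → dist x y ≤ dist x z := by
  have hsep {a b : M} (hab : a ≠ b) (h : ‖f a - f b‖ = dist a b) : ε ≤ dist a b :=
    le_dist_of_mul_dist_lt_norm_sub hloc hab <| h ▸ by nlinarith [dist_pos.2 hab]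
  set A : Set (M × M) := {p | ε ≤ dist p.1 p.2 ∧ ‖f p.1 - f p.2‖ = dist p.1 p.2}
  have hA : IsCompact A :=
    ((isClosed_le continuous_const continuous_dist).inter (isClosed_eq
      ((hf.continuous.comp continuous_fst).sub (hf.continuous.comp continuous_snd)).norm
      continuous_dist)).isCompact
  obtain ⟨a, b, hab, hattain⟩ := exists_norm_sub_eq_dist hε hf happrox hloc
  obtain ⟨p, ⟨hpε, hpattain⟩, hpmin⟩ :=
    hA.exists_isMinOn ⟨(a, b), hsep hab hattain, hattain⟩ continuous_dist.continuousOn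
  exact ⟨p.1, p.2, dist_pos.1 (hε.trans_le hpε), hpattain,
    fun z hz h ↦ hpmin (show (p.1, z) ∈ A from ⟨hsep hz.symm h, h⟩)⟩

lemma mul_dist_le_gromovProduct
    (hloc : ∀ x y : M, x ≠ y → dist x y < ε → ‖f x - f y‖ ≤ (1 - ε) * dist x y)
    (hf : LipschitzWith 1 f) {x y z : M} (hattain : ‖f x - f y‖ = dist x y) (hzx : z ≠ x)
    (hxz : dist x z < ε) : ε / 2 * dist x z ≤ gromovProduct x y z := by
  have hfxz := hloc x z hzx.symm hxz
  have hfzy := norm_sub_le_dist_of_lipschitzWith_one hf z y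
  have htri := norm_sub_le_norm_sub_add_norm_sub (f x) (f z) (f y)
  rw [gromovProduct, dist_comm y z]
  linarith

lemma gromovProduct_pos_of_minimal (hf : LipschitzWith 1 f) {x y z : M}
    (hattain : ‖f x - f y‖ = dist x y)
    (hmin : ∀ z, z ≠ x → ‖f x - f z‖ = dist x z → dist x y ≤ dist x z)
    (hzx : z ≠ x) (hzy : z ≠ y) : 0 < gromovProduct x y z := by
  rw [gromovProduct]
  by_contra! hle
  have hyz : 0 < dist y z := dist_pos.2 hzy.symm
  have hzx_attain : ‖f x - f z‖ = dist x z := by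
    refine (norm_sub_le_dist_of_lipschitzWith_one hf x z).antisymm ?_
    have hfzy := norm_sub_le_dist_of_lipschitzWith_one hf z y
    have htri := norm_sub_le_norm_sub_add_norm_sub (f x) (f z) (f y)
    rw [dist_comm z y] at hfzy
    linarith
  linarith [hmin z hzx hzx_attain]

lemma exists_pos_mul_min_le_gromovProduct [CompactSpace M] (hε : 0 < ε) (hf : LipschitzWith 1 f)
    (hloc : ∀ x y : M, x ≠ y → dist x y < ε → ‖f x - f y‖ ≤ (1 - ε) * dist x y)
    {x y : M} (hattain : ‖f x - f y‖ = dist x y)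
    (hmin : ∀ z, z ≠ x → ‖f x - f z‖ = dist x z → dist x y ≤ dist x z) :
    ∃ δ > 0, ∀ z, z ≠ x → z ≠ y →
      δ * min (dist x z) (dist y z) ≤ gromovProduct x y z := by
  set K : Set M := {z | ε ≤ dist x z ∧ ε ≤ dist y z}
  have hK : IsCompact K :=
    ((isClosed_le continuous_const (continuous_const.dist continuous_id)).inter
      (isClosed_le continuous_const (continuous_const.dist continuous_id))).isCompact
  have hminpos : ∀ z ∈ K, 0 < min (dist x z) (dist y z) := fun z hz ↦
    lt_min (hε.trans_le hz.1) (hε.trans_le hz.2)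
  have hcont : ContinuousOn (fun z ↦ gromovProduct x y z / min (dist x z) (dist y z)) K :=
    (continuous_gromovProduct x y).continuousOn.div (by fun_prop) fun z hz ↦ (hminpos z hz).ne'
  obtain ⟨c, hc, hcK⟩ := hK.exists_forall_le' hcont fun z hz ↦ div_pos
    (gromovProduct_pos_of_minimal hf hattain hmin (dist_pos.1 (hε.trans_le hz.1)).symm
      (dist_pos.1 (hε.trans_le hz.2)).symm) (hminpos z hz)
  refine ⟨min (ε / 2) c, lt_min (half_pos hε) hc, fun z hzx hzy ↦ ?_⟩
  have hm0 : 0 ≤ min (dist x z) (dist y z) := le_min dist_nonneg dist_nonneg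
  by_cases hxz : dist x z < ε
  · calc min (ε / 2) c * min (dist x z) (dist y z) ≤ ε / 2 * dist x z :=
          mul_le_mul (min_le_left _ _) (min_le_left _ _) hm0 (half_pos hε).le
      _ ≤ gromovProduct x y z := mul_dist_le_gromovProduct hloc hf hattain hzx hxz
  by_cases hyz : dist y z < ε
  · have hattain' : ‖f y - f x‖ = dist y x := by rw [norm_sub_rev, hattain, dist_comm]
    calc min (ε / 2) c * min (dist x z) (dist y z) ≤ ε / 2 * dist y z :=
          mul_le_mul (min_le_left _ _) (min_le_right _ _) hm0 (half_pos hε).le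
      _ ≤ gromovProduct y x z := mul_dist_le_gromovProduct hloc hf hattain' hzy hyz
      _ = gromovProduct x y z := gromovProduct_comm y x z
  have hzK : z ∈ K := ⟨not_lt.1 hxz, not_lt.1 hyz⟩
  calc min (ε / 2) c * min (dist x z) (dist y z) ≤ c * min (dist x z) (dist y z) :=
        mul_le_mul_of_nonneg_right (min_le_right _ _) hm0
    _ ≤ gromovProduct x y z := (le_div_iff₀ (hminpos z hzK)).1 (hcK z hzK)

end NonLocal

theorem stmt_9_general {M : Type*} [MetricSpace M] [CompactSpace M]
    {Y : Type*} [NormedAddCommGroup Y]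
    (f : M → Y) (hnorm : lipNorm f = 1) (hnl : ¬ IsLocalMap f) :
    ∃ x y : M, x ≠ y ∧ ‖f x - f y‖ = dist x y ∧
      ∃ ε > (0 : ℝ), ∀ z : M, z ≠ x → z ≠ y →
        ε * min (dist x z) (dist y z) ≤ (dist x z + dist y z - dist x y) / 2 := by
  have h0 : lipNorm f ≠ 0 := by rw [hnorm]; exact one_ne_zero
  have hf : LipschitzWith 1 f := LipschitzWith.of_dist_le_mul fun x y ↦ by
    simpa [dist_eq_norm, hnorm] using norm_sub_le_lipNorm_mul_dist h0 x y
  obtain ⟨ε, hε, hloc⟩ := exists_norm_sub_le_of_not_isLocalMap hnl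
  rw [hnorm] at hloc
  obtain ⟨x, y, hxy, hattain, hmin⟩ := exists_norm_sub_eq_dist_minimal hε hf
    (fun r hr ↦ exists_mul_dist_lt_norm_sub h0 (hnorm ▸ hr)) hloc
  exact ⟨x, y, hxy, hattain, exists_pos_mul_min_le_gromovProduct hε hf hloc hattain hmin⟩

/-- Let `M` be compact, `Y` Banach, and `f : M → Y` a non-local Lipschitz map with
`‖f‖_L = 1`. Then `f` attains its norm at a pair `(x,y)` failing property (Z): there is
`ε > 0` with `(x,y)_z ≥ ε · min(d(x,z), d(y,z))` for all `z ∉ {x,y}`. -/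
theorem stmt_9 {M : Type*} [MetricSpace M] [CompactSpace M]
    {Y : Type*} [NormedAddCommGroup Y] [NormedSpace ℝ Y] [CompleteSpace Y]
    (f : M → Y) (hf : IsLip f) (hnorm : lipNorm f = 1) (hnl : ¬ IsLocalMap f) :
    ∃ x y : M, x ≠ y ∧ ‖f x - f y‖ = dist x y ∧
      ∃ ε > (0 : ℝ), ∀ z : M, z ≠ x → z ≠ y →
        ε * min (dist x z) (dist y z) ≤ (dist x z + dist y z - dist x y) / 2 :=
  stmt_9_general f hnorm hnl
end

section
/- Let X and Y be Banach spaces with Y ≠ {0}. Then the following are equivalent: (1) the set of bounded linear operators T : X → Y that attain their norm at a strongly exposed point of B_X (i.e. there is a strongly exposed point x of B_X with ‖T(x)‖ = ‖T‖) is dense in the space L(X,Y) of bounded operators with the operator norm; (2) the set of absolutely strongly exposing operators T : X → Y is dense in L(X,Y). -/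
open Filter Topology

/-- `x` is a strongly exposed point of the closed unit ball of `X`: it is a unit vector and
some norm-one functional `f` with `f x = 1` satisfies that every sequence of the unit ball on
which `f` tends to `1` converges in norm to `x`. -/
def StronglyExposedPoint (X : Type*) [NormedAddCommGroup X] [NormedSpace ℝ X]
    (x : X) : Prop :=
  ‖x‖ = 1 ∧ ∃ f : X →L[ℝ] ℝ, ‖f‖ = 1 ∧ f x = 1 ∧
    ∀ u : ℕ → X, (∀ n, ‖u n‖ ≤ 1) → Tendsto (fun n => f (u n)) atTop (𝓝 1) →
      Tendsto u atTop (𝓝 x)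

/-- `T` is an absolutely strongly exposing operator: there is a unit vector `x` such that
every sequence of the unit ball on which `‖T ·‖` tends to `‖T‖` has a subsequence converging
in norm to `x` or to `-x`. -/
def AbsStronglyExposing {X Y : Type*} [NormedAddCommGroup X] [NormedSpace ℝ X]
    [NormedAddCommGroup Y] [NormedSpace ℝ Y] (T : X →L[ℝ] Y) : Prop :=
  ∃ x : X, ‖x‖ = 1 ∧ ∀ u : ℕ → X, (∀ n, ‖u n‖ ≤ 1) →
    Tendsto (fun n => ‖T (u n)‖) atTop (𝓝 ‖T‖) →
      ∃ σ : ℕ → ℕ, StrictMono σ ∧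
        (Tendsto (fun k => u (σ k)) atTop (𝓝 x) ∨ Tendsto (fun k => u (σ k)) atTop (𝓝 (-x)))

/-!
A strongly exposing functional `f` for `x` and a unit vector `y` with `S x = ‖S‖ • y` turn an
operator `S` attaining its norm at `x` into `S + δ • f.smulRight y`, whose norm `‖S‖ + δ` is
approached on the unit ball only where `|f| → 1`, i.e. only near `x` or `-x`. Conversely, if
every maximizing sequence of `S` clusters at `±x`, then `S` attains its norm at `x`, and the
functional `‖S‖⁻¹ • g ∘ S`, with `g` norming `S x`, strongly exposes `x`: along a sequence where it
tends to `1` the norms `‖S u‖` tend to `‖S‖`, and the cluster point `-x` is excluded by the sign.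
-/

section

variable {X Y : Type*} [NormedAddCommGroup X] [NormedSpace ℝ X]
  [NormedAddCommGroup Y] [NormedSpace ℝ Y]

def AbsStronglyExposingAt (S : X →L[ℝ] Y) (x : X) : Prop :=
  ∀ u : ℕ → X, (∀ n, ‖u n‖ ≤ 1) → Tendsto (fun n => ‖S (u n)‖) atTop (𝓝 ‖S‖) →
    ∃ σ : ℕ → ℕ, StrictMono σ ∧
      (Tendsto (fun k => u (σ k)) atTop (𝓝 x) ∨ Tendsto (fun k => u (σ k)) atTop (𝓝 (-x)))

theorem ContinuousLinearMap.exists_tendsto_norm_apply_opNorm (S : X →L[ℝ] Y) :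
    ∃ u : ℕ → X, (∀ n, ‖u n‖ ≤ 1) ∧ Tendsto (fun n => ‖S (u n)‖) atTop (𝓝 ‖S‖) := by
  have hlt (n : ℕ) : ‖S‖ - 1 / (n + 1) < ‖S‖ := sub_lt_self _ Nat.one_div_pos_of_nat
  choose u hu hSu using fun n => S.exists_lt_apply_of_lt_opNorm (hlt n)
  refine ⟨u, fun n => (hu n).le, ?_⟩
  have hlow : Tendsto (fun n : ℕ => ‖S‖ - 1 / (n + 1)) atTop (𝓝 ‖S‖) := by
    simpa using tendsto_const_nhds.sub (tendsto_one_div_add_atTop_nhds_zero_nat (𝕜 := ℝ))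
  exact tendsto_of_tendsto_of_tendsto_of_le_of_le hlow tendsto_const_nhds
    (fun n => (hSu n).le) (fun n => S.unit_le_opNorm _ (hu n).le)

theorem tendsto_norm_of_tendsto_dual_apply {g : Y →L[ℝ] ℝ} (hg : ‖g‖ ≤ 1) {v : ℕ → Y} {c : ℝ}
    (hv : ∀ n, ‖v n‖ ≤ c) (hgv : Tendsto (fun n => g (v n)) atTop (𝓝 c)) :
    Tendsto (fun n => ‖v n‖) atTop (𝓝 c) := by
  refine tendsto_of_tendsto_of_tendsto_of_le_of_le hgv tendsto_const_nhds (fun n => ?_) hv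
  calc g (v n) ≤ ‖g (v n)‖ := Real.le_norm_self _
    _ ≤ ‖g‖ * ‖v n‖ := g.le_opNorm _
    _ ≤ ‖v n‖ := mul_le_of_le_one_left (norm_nonneg _) hg

theorem exists_norm_eq_one_smul_eq [Nontrivial Y] (v : Y) : ∃ y : Y, ‖y‖ = 1 ∧ v = ‖v‖ • y := by
  rcases eq_or_ne v 0 with rfl | hv
  · obtain ⟨y, hy⟩ := exists_norm_eq Y zero_le_one
    exact ⟨y, hy, by simp⟩
  · refine ⟨‖v‖⁻¹ • v, ?_, ?_⟩
    · rw [norm_smul, norm_inv, norm_norm, inv_mul_cancel₀ (norm_ne_zero_iff.mpr hv)]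
    · rw [smul_smul, mul_inv_cancel₀ (norm_ne_zero_iff.mpr hv), one_smul]

namespace AbsStronglyExposingAt

variable {S : X →L[ℝ] Y} {x : X}

theorem norm_apply_eq (h : AbsStronglyExposingAt S x) : ‖S x‖ = ‖S‖ := by
  obtain ⟨u, hu, hSu⟩ := S.exists_tendsto_norm_apply_opNorm
  obtain ⟨σ, hσ, hlim⟩ := h u hu hSu
  have hSuσ : Tendsto (fun k => ‖S (u (σ k))‖) atTop (𝓝 ‖S x‖) := by
    rcases hlim with hlim | hlim
    · exact ((S.continuous.tendsto x).comp hlim).norm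
    · simpa using ((S.continuous.tendsto (-x)).comp hlim).norm
  exact tendsto_nhds_unique hSuσ (hSu.comp hσ.tendsto_atTop)

theorem apply_ne_zero (h : AbsStronglyExposingAt S x) (hx : x ≠ 0) : S x ≠ 0 := by
  intro hSx
  have hS : ‖S‖ = 0 := by rw [← h.norm_apply_eq, hSx, norm_zero]
  obtain ⟨σ, -, hlim⟩ := h (fun _ => 0) (fun _ => by simp) (by simp [hS])
  rcases hlim with hlim | hlim
  · exact hx (tendsto_nhds_unique hlim tendsto_const_nhds)
  · exact hx (neg_eq_zero.mp (tendsto_nhds_unique hlim tendsto_const_nhds))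

theorem stronglyExposedPoint (h : AbsStronglyExposingAt S x) (hx : ‖x‖ = 1) :
    StronglyExposedPoint X x := by
  have hSx : ‖S x‖ = ‖S‖ := h.norm_apply_eq
  have hSx0 : ‖S x‖ ≠ 0 := by simpa using h.apply_ne_zero (by rintro rfl; simp at hx)
  have hS0 : ‖S‖ ≠ 0 := hSx ▸ hSx0
  obtain ⟨g, hg, hgSx⟩ := exists_dual_vector ℝ (S x) hSx0
  set f : X →L[ℝ] ℝ := ‖S‖⁻¹ • g.comp S
  have hf_apply (v : X) : f v = ‖S‖⁻¹ * g (S v) := rfl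
  have hfx : f x = 1 := by simp [hf_apply, hgSx, hSx, hS0]
  have hf_le : ‖f‖ ≤ 1 := calc
    ‖f‖ ≤ ‖‖S‖⁻¹‖ * ‖g.comp S‖ := norm_smul_le (‖S‖⁻¹) (g.comp S)
    _ ≤ ‖S‖⁻¹ * (‖g‖ * ‖S‖) := by
      rw [norm_inv, norm_norm]; gcongr; exact g.opNorm_comp_le S
    _ = 1 := by rw [hg, one_mul, inv_mul_cancel₀ hS0]
  have hf : ‖f‖ = 1 := le_antisymm hf_le (by simpa [hfx, hx] using f.le_opNorm x)
  refine ⟨hx, f, hf, hfx, fun u hu hfu => ?_⟩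
  have hgSu : Tendsto (fun n => g (S (u n))) atTop (𝓝 ‖S‖) := by
    have hfg (n : ℕ) : g (S (u n)) = ‖S‖ * f (u n) := by
      rw [hf_apply, mul_inv_cancel_left₀ hS0]
    simpa [hfg] using hfu.const_mul ‖S‖
  have hSu := tendsto_norm_of_tendsto_dual_apply hg.le (fun n => S.unit_le_opNorm _ (hu n)) hgSu
  refine tendsto_of_subseq_tendsto fun ns hns => ?_
  obtain ⟨σ, hσ, hlim⟩ := h (u ∘ ns) (fun n => hu _) (hSu.comp hns)
  refine ⟨σ, hlim.resolve_right fun hneg => ?_⟩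
  have h1 : Tendsto (fun k => f (u (ns (σ k)))) atTop (𝓝 (f (-x))) :=
    (f.continuous.tendsto (-x)).comp hneg
  have h2 : Tendsto (fun k => f (u (ns (σ k)))) atTop (𝓝 1) :=
    hfu.comp (hns.comp hσ.tendsto_atTop)
  have := tendsto_nhds_unique h1 h2
  rw [map_neg, hfx] at this
  norm_num at this

end AbsStronglyExposingAt

theorem exists_subseq_tendsto_or_tendsto_neg_of_tendsto_abs {f : X →L[ℝ] ℝ} (hf : ‖f‖ ≤ 1)
    {x : X} (hexp : ∀ u : ℕ → X, (∀ n, ‖u n‖ ≤ 1) → Tendsto (fun n => f (u n)) atTop (𝓝 1) →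
      Tendsto u atTop (𝓝 x))
    {u : ℕ → X} (hu : ∀ n, ‖u n‖ ≤ 1) (hfu : Tendsto (fun n => |f (u n)|) atTop (𝓝 1)) :
    ∃ σ : ℕ → ℕ, StrictMono σ ∧
      (Tendsto (fun k => u (σ k)) atTop (𝓝 x) ∨ Tendsto (fun k => u (σ k)) atTop (𝓝 (-x))) := by
  have hmem (n : ℕ) : f (u n) ∈ Metric.closedBall (0 : ℝ) 1 :=
    mem_closedBall_zero_iff.mpr ((f.unit_le_opNorm _ (hu n)).trans hf)
  obtain ⟨a, -, σ, hσ, hlim⟩ := tendsto_subseq_of_bounded Metric.isBounded_closedBall hmem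
  have ha : |a| = 1 := tendsto_nhds_unique hlim.abs (hfu.comp hσ.tendsto_atTop)
  refine ⟨σ, hσ, ?_⟩
  rcases (abs_eq zero_le_one).mp ha with rfl | rfl
  · exact Or.inl (hexp _ (fun k => hu _) hlim)
  · refine Or.inr ?_
    have hneg := hexp (fun k => -u (σ k)) (fun k => by simpa using hu _) (by simpa using hlim.neg)
    simpa using hneg.neg

theorem norm_smul_smulRight_of_norm_eq_one {f : X →L[ℝ] ℝ} {y : Y} (hf : ‖f‖ = 1)
    (hy : ‖y‖ = 1) {δ : ℝ} (hδ : 0 ≤ δ) : ‖δ • f.smulRight y‖ = δ := by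
  rw [norm_smul, ContinuousLinearMap.norm_smulRight_apply, hf, hy, Real.norm_of_nonneg hδ,
    one_mul, mul_one]

theorem absStronglyExposingAt_add_smul_smulRight {S : X →L[ℝ] Y} {x : X} {f : X →L[ℝ] ℝ}
    {y : Y} {δ : ℝ} (hx : ‖x‖ = 1) (hf : ‖f‖ = 1) (hfx : f x = 1)
    (hexp : ∀ u : ℕ → X, (∀ n, ‖u n‖ ≤ 1) → Tendsto (fun n => f (u n)) atTop (𝓝 1) →
      Tendsto u atTop (𝓝 x))
    (hy : ‖y‖ = 1) (hSx : S x = ‖S‖ • y) (hδ : 0 < δ) :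
    AbsStronglyExposingAt (S + δ • f.smulRight y) x := by
  set S' := S + δ • f.smulRight y
  have hS'_apply (v : X) : S' v = S v + (δ * f v) • y := by simp [S', smul_smul]
  have hS' : ‖S'‖ = ‖S‖ + δ := by
    refine le_antisymm ?_ ?_
    · calc ‖S'‖ ≤ ‖S‖ + ‖δ • f.smulRight y‖ := norm_add_le _ _
        _ = ‖S‖ + δ := by rw [norm_smul_smulRight_of_norm_eq_one hf hy hδ.le]
    · have hS'x : ‖S' x‖ = ‖S‖ + δ := by
        rw [hS'_apply, hSx, hfx, mul_one, ← add_smul, norm_smul, hy, mul_one,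
          Real.norm_of_nonneg (by positivity)]
      simpa [hS'x, hx] using S'.le_opNorm x
  have hS'_le (v : X) (hv : ‖v‖ ≤ 1) : ‖S' v‖ ≤ ‖S‖ + δ * |f v| := calc
    ‖S' v‖ ≤ ‖S v‖ + ‖(δ * f v) • y‖ := by rw [hS'_apply]; exact norm_add_le _ _
    _ ≤ ‖S‖ + δ * |f v| := by
      rw [norm_smul, hy, mul_one, Real.norm_eq_abs, abs_mul, abs_of_pos hδ]
      gcongr
      exact S.unit_le_opNorm v hv
  intro u hu hS'u
  refine exists_subseq_tendsto_or_tendsto_neg_of_tendsto_abs hf.le hexp hu ?_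
  rw [hS'] at hS'u
  have hlow : Tendsto (fun n => (‖S' (u n)‖ - ‖S‖) / δ) atTop (𝓝 1) := by
    simpa [hδ.ne'] using (hS'u.sub_const ‖S‖).div_const δ
  refine tendsto_of_tendsto_of_tendsto_of_le_of_le hlow tendsto_const_nhds (fun n => ?_) fun n => ?_
  · rw [div_le_iff₀ hδ]
    linarith [hS'_le _ (hu n)]
  · simpa using (f.unit_le_opNorm _ (hu n)).trans hf.le

theorem StronglyExposedPoint.exists_absStronglyExposing_norm_sub_le [Nontrivial Y]
    {S : X →L[ℝ] Y} {x : X} (hx : StronglyExposedPoint X x) (hSx : ‖S x‖ = ‖S‖) {δ : ℝ}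
    (hδ : 0 < δ) : ∃ S' : X →L[ℝ] Y, AbsStronglyExposing S' ∧ ‖S - S'‖ ≤ δ := by
  obtain ⟨hx1, f, hf, hfx, hexp⟩ := hx
  obtain ⟨y, hy, hSy⟩ := exists_norm_eq_one_smul_eq (S x)
  refine ⟨S + δ • f.smulRight y,
    ⟨x, hx1, absStronglyExposingAt_add_smul_smulRight hx1 hf hfx hexp hy (hSx ▸ hSy) hδ⟩, ?_⟩
  rw [sub_add_cancel_left, norm_neg, norm_smul_smulRight_of_norm_eq_one hf hy hδ.le]

end

theorem stmt_12_general {X Y : Type*} [NormedAddCommGroup X] [NormedSpace ℝ X]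
    [NormedAddCommGroup Y] [NormedSpace ℝ Y] [Nontrivial Y] :
    (∀ T : X →L[ℝ] Y, ∀ ε > (0 : ℝ), ∃ S : X →L[ℝ] Y,
      (∃ x : X, StronglyExposedPoint X x ∧ ‖S x‖ = ‖S‖) ∧ ‖T - S‖ < ε) ↔
    (∀ T : X →L[ℝ] Y, ∀ ε > (0 : ℝ), ∃ S : X →L[ℝ] Y,
      AbsStronglyExposing S ∧ ‖T - S‖ < ε) := by
  constructor
  · intro h T ε hε
    obtain ⟨S, ⟨x, hx, hSx⟩, hTS⟩ := h T (ε / 2) (half_pos hε)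
    obtain ⟨S', hS', hSS'⟩ := hx.exists_absStronglyExposing_norm_sub_le hSx (half_pos hε)
    refine ⟨S', hS', ?_⟩
    calc ‖T - S'‖ ≤ ‖T - S‖ + ‖S - S'‖ := norm_sub_le_norm_sub_add_norm_sub T S S'
      _ < ε := by linarith
  · intro h T ε hε
    obtain ⟨S, ⟨x, hx, hS : AbsStronglyExposingAt S x⟩, hTS⟩ := h T ε hε
    exact ⟨S, ⟨x, hS.stronglyExposedPoint hx, hS.norm_apply_eq⟩, hTS⟩

/-- For Banach spaces `X`, `Y` with `Y ≠ {0}`: the operators attaining their norm at a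
strongly exposed point of `B_X` are dense in `L(X,Y)` iff the absolutely strongly exposing
operators are dense in `L(X,Y)`. -/
theorem stmt_12 {X Y : Type*} [NormedAddCommGroup X] [NormedSpace ℝ X] [CompleteSpace X]
    [NormedAddCommGroup Y] [NormedSpace ℝ Y] [CompleteSpace Y] [Nontrivial Y] :
    (∀ T : X →L[ℝ] Y, ∀ ε > (0 : ℝ), ∃ S : X →L[ℝ] Y,
      (∃ x : X, StronglyExposedPoint X x ∧ ‖S x‖ = ‖S‖) ∧ ‖T - S‖ < ε) ↔
    (∀ T : X →L[ℝ] Y, ∀ ε > (0 : ℝ), ∃ S : X →L[ℝ] Y,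
      AbsStronglyExposing S ∧ ‖T - S‖ < ε) :=
  stmt_12_general
end

section
/- Let X be a Banach space and let S be a uniformly strongly exposed subset of the unit sphere of X. Then the norm closure of S is also a uniformly strongly exposed set; that is, there is a family (g_x)_{x∈cl(S)} in X* with ‖g_x‖ = g_x(x) = 1 for every x ∈ cl(S) such that for every ε > 0 there exists δ > 0 with: x ∈ cl(S), z ∈ B_X and g_x(z) > 1−δ imply ‖x−z‖ < ε. -/
/-
For `y ∈ cl S`, the functional `g_y` is a weak-* cluster point of `F x` as `x → y` in `S`
(Banach–Alaoglu). Since `F x y → 1`, we get `g_y y = 1`. If `g_y z > 1 - δ`, then `F x z > 1 - δ`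
for points `x ∈ S` arbitrarily close to `y`, so `‖y - z‖ ≤ ε` whenever `δ` works for `ε` in `S`.
-/

open Filter Topology Metric

/-- `S` is a uniformly strongly exposed subset of the unit sphere of `X`: every `x ∈ S` is a
unit vector, and there is a family of functionals `(F x)_{x ∈ S}` with `‖F x‖ = F x x = 1`
such that for every `ε > 0` there is `δ > 0` with: `x ∈ S`, `‖z‖ ≤ 1` and `F x z > 1 - δ`
imply `‖x - z‖ < ε`. -/
def UnifStronglyExposed {X : Type*} [NormedAddCommGroup X] [NormedSpace ℝ X]
    (S : Set X) : Prop :=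
  (∀ x ∈ S, ‖x‖ = 1) ∧
  ∃ F : X → X →L[ℝ] ℝ,
    (∀ x ∈ S, ‖F x‖ = 1 ∧ F x x = 1) ∧
    ∀ ε > (0 : ℝ), ∃ δ > (0 : ℝ), ∀ x ∈ S, ∀ z : X, ‖z‖ ≤ 1 → F x z > 1 - δ → ‖x - z‖ < ε

theorem exists_mapClusterPt_apply {𝕜 E α : Type*} [NontriviallyNormedField 𝕜] [ProperSpace 𝕜]
    [SeminormedAddCommGroup E] [NormedSpace 𝕜 E] {l : Filter α} [l.NeBot]
    {F : α → StrongDual 𝕜 E} {r : ℝ} (hF : ∀ᶠ a in l, ‖F a‖ ≤ r) :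
    ∃ g : StrongDual 𝕜 E, ‖g‖ ≤ r ∧ ∀ z, MapClusterPt (g z) l (fun a ↦ F a z) := by
  have hball : map (fun a ↦ StrongDual.toWeakDual (F a)) l ≤
      𝓟 (WeakDual.toStrongDual ⁻¹' closedBall (0 : StrongDual 𝕜 E) r) := by
    rw [le_principal_iff, mem_map]
    exact hF.mono fun a ha ↦ by simpa using ha
  obtain ⟨g, hg_ball, hg⟩ :=
    (WeakDual.isCompact_closedBall (𝕜 := 𝕜) 0 r).exists_mapClusterPt hball
  refine ⟨WeakDual.toStrongDual g, by simpa using hg_ball, fun z ↦ ?_⟩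
  exact hg.continuousAt_comp (WeakDual.eval_continuous z).continuousAt

section

variable {X : Type*} [NormedAddCommGroup X] [NormedSpace ℝ X] {S : Set X}
  {F : X → StrongDual ℝ X}

theorem tendsto_apply_nhdsWithin_of_apply_self {C : ℝ} (hF : ∀ x ∈ S, ‖F x‖ ≤ C ∧ F x x = 1)
    (y : X) : Tendsto (fun x ↦ F x y) (𝓝[S] y) (𝓝 1) := by
  have hbound : ∀ᶠ x in 𝓝[S] y, ‖F x y - 1‖ ≤ C * ‖x - y‖ := by
    filter_upwards [self_mem_nhdsWithin] with x hx
    calc ‖F x y - 1‖ = ‖F x (y - x)‖ := by rw [map_sub, (hF x hx).2]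
      _ ≤ ‖F x‖ * ‖y - x‖ := (F x).le_opNorm _
      _ ≤ C * ‖x - y‖ := by rw [norm_sub_rev]; gcongr; exact (hF x hx).1
  have hC : Tendsto (fun x ↦ C * ‖x - y‖) (𝓝[S] y) (𝓝 0) := by
    simpa using ((tendsto_norm_sub_self y).const_mul C).mono_left nhdsWithin_le_nhds
  exact tendsto_iff_norm_sub_tendsto_zero.2 <|
    squeeze_zero' (.of_forall fun _ ↦ norm_nonneg _) hbound hC

theorem norm_sub_le_of_mapClusterPt {ε δ : ℝ}
    (hexp : ∀ x ∈ S, ∀ z : X, ‖z‖ ≤ 1 → F x z > 1 - δ → ‖x - z‖ < ε)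
    {y z : X} {g : StrongDual ℝ X} (hz : ‖z‖ ≤ 1) (hgz : g z > 1 - δ)
    (hg : MapClusterPt (g z) (𝓝[S] y) (fun x ↦ F x z)) : ‖y - z‖ ≤ ε := by
  have hfreq : ∃ᶠ x in 𝓝[S] y, F x z > 1 - δ := hg.frequently (Ioi_mem_nhds hgz)
  have hy : y ∈ closure (S ∩ {x | F x z > 1 - δ}) := by
    rw [frequently_nhdsWithin_iff] at hfreq
    exact mem_closure_iff_frequently.2 (hfreq.mono fun x hx ↦ ⟨hx.2, hx.1⟩)
  have hclosed : IsClosed {x : X | ‖x - z‖ ≤ ε} :=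
    isClosed_le (continuous_id.sub continuous_const).norm continuous_const
  exact closure_minimal (fun x hx ↦ (hexp x hx.1 z hz hx.2).le) hclosed hy

end

theorem stmt_13_general {X : Type*} [NormedAddCommGroup X] [NormedSpace ℝ X]
    (S : Set X) (hS : UnifStronglyExposed S) :
    UnifStronglyExposed (closure S) := by
  obtain ⟨hsphere, F, hF, hexp⟩ := hS
  choose! G hG_norm hG_clust using fun y (hy : y ∈ closure S) ↦
    have := mem_closure_iff_nhdsWithin_neBot.mp hy
    exists_mapClusterPt_apply (l := 𝓝[S] y) (F := F) (r := 1)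
      (eventually_nhdsWithin_of_forall fun x hx ↦ (hF x hx).1.le)
  have hG_self : ∀ y ∈ closure S, G y y = 1 := fun y hy ↦
    eq_of_nhds_neBot ((hG_clust y hy y).clusterPt.mono
      (tendsto_apply_nhdsWithin_of_apply_self (fun x hx ↦ ⟨(hF x hx).1.le, (hF x hx).2⟩) y)).neBot
  have hsphere' : ∀ y ∈ closure S, ‖y‖ = 1 := fun y hy ↦
    mem_sphere_zero_iff_norm.mp <| closure_minimal (fun x hx ↦ by simpa using hsphere x hx)
      isClosed_sphere hy
  refine ⟨hsphere', G, fun y hy ↦ ⟨(hG_norm y hy).antisymm ?_, hG_self y hy⟩, fun ε hε ↦ ?_⟩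
  · simpa [hG_self y hy, hsphere' y hy] using (G y).le_opNorm y
  · obtain ⟨δ, hδ, hδexp⟩ := hexp (ε / 2) (half_pos hε)
    exact ⟨δ, hδ, fun y hy z hz hGz ↦
      (norm_sub_le_of_mapClusterPt hδexp hz hGz (hG_clust y hy z)).trans_lt (half_lt_self hε)⟩

/-- In a Banach space, the norm closure of a uniformly strongly exposed subset of the unit
sphere is again uniformly strongly exposed. -/
theorem stmt_13 {X : Type*} [NormedAddCommGroup X] [NormedSpace ℝ X] [CompleteSpace X]
    (S : Set X) (hS : UnifStronglyExposed S) :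
    UnifStronglyExposed (closure S) :=
  stmt_13_general S hS
end

section
/- Let X and Y be Banach spaces with X ≠ {0}, and let Z = X ⊕₁ Y. If the unit sphere of Z contains a uniformly strongly exposed set Γ whose closed convex hull equals B_Z, then the unit sphere of X contains a uniformly strongly exposed set Δ whose closed convex hull equals B_X. -/
open Metric Set

section

variable {E E' : Type*} [NormedAddCommGroup E] [NormedSpace ℝ E]
  [NormedAddCommGroup E'] [NormedSpace ℝ E']

namespace UnifStronglyExposed

theorem subset_exposedPoints {S : Set E} (hS : UnifStronglyExposed S) :
    S ⊆ (closedBall (0 : E) 1).exposedPoints ℝ := by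
  obtain ⟨hS1, F, hF, hFδ⟩ := hS
  intro x hx
  refine ⟨mem_closedBall_zero_iff.2 (hS1 x hx).le, F x, fun y hy => ⟨?_, fun hxy => ?_⟩⟩
  · calc F x y ≤ ‖F x‖ * ‖y‖ := le_of_abs_le ((F x).le_opNorm y)
      _ ≤ 1 := by rw [(hF x hx).1, one_mul]; exact mem_closedBall_zero_iff.1 hy
      _ = F x x := (hF x hx).2.symm
  · refine (eq_of_forall_dist_le fun ε hε => ?_).symm
    obtain ⟨δ, hδ, hxδ⟩ := hFδ ε hε
    rw [dist_eq_norm]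
    exact (hxδ x hx y (mem_closedBall_zero_iff.1 hy) (by linarith [(hF x hx).2])).le

theorem preimage_linearIsometry {S : Set E'} (hS : UnifStronglyExposed S) (ι : E →ₗᵢ[ℝ] E') :
    UnifStronglyExposed (ι ⁻¹' S) := by
  obtain ⟨hS1, F, hF, hFδ⟩ := hS
  have hι1 : ∀ x ∈ ι ⁻¹' S, ‖x‖ = 1 := fun x hx => ι.norm_map x ▸ hS1 _ hx
  refine ⟨hι1, fun x => (F (ι x)).comp ι.toContinuousLinearMap, fun x hx => ?_, fun ε hε => ?_⟩
  · have hx1 : (F (ι x)).comp ι.toContinuousLinearMap x = 1 := (hF _ hx).2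
    refine ⟨le_antisymm ?_ ?_, hx1⟩
    · calc _ ≤ ‖F (ι x)‖ * ‖ι.toContinuousLinearMap‖ := ContinuousLinearMap.opNorm_comp_le _ _
        _ ≤ 1 := by rw [(hF _ hx).1, one_mul]; exact ι.norm_toContinuousLinearMap_le
    · simpa [hx1, hι1 x hx] using ((F (ι x)).comp ι.toContinuousLinearMap).le_opNorm x
  · obtain ⟨δ, hδ, hxδ⟩ := hFδ ε hε
    refine ⟨δ, hδ, fun x hx z hz hFz => ?_⟩
    simpa [← map_sub] using hxδ (ι x) hx (ι z) (by simpa using hz) hFz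

end UnifStronglyExposed

namespace WithLp

noncomputable def inlₗᵢ (p : ENNReal) [Fact (1 ≤ p)] : E →ₗᵢ[ℝ] WithLp p (E × E') where
  toLinearMap := (WithLp.linearEquiv p ℝ (E × E')).symm.toLinearMap ∘ₗ LinearMap.inl ℝ E E'
  norm_map' := norm_toLp_fst p E E'

theorem fst_eq_zero_or_snd_eq_zero_of_mem_extremePoints {z : WithLp 1 (E × E')}
    (hz : z ∈ (closedBall 0 1).extremePoints ℝ) : z.fst = 0 ∨ z.snd = 0 := by
  by_contra! h
  have hzn := prod_norm_eq_of_L1 z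
  have hu := norm_pos_iff.2 h.1
  have hv := norm_pos_iff.2 h.2
  have hz0 : 0 < ‖z‖ := hzn ▸ add_pos hu hv
  set a := ‖z.fst‖ / ‖z‖
  set b := ‖z.snd‖ / ‖z‖
  have ha : 0 < a := div_pos hu hz0
  have hb : 0 < b := div_pos hv hz0
  set q₁ : WithLp 1 (E × E') := a⁻¹ • toLp 1 (z.fst, 0)
  set q₂ : WithLp 1 (E × E') := b⁻¹ • toLp 1 (0, z.snd)
  have hq₁ : q₁ ∈ closedBall 0 1 := by
    simpa [q₁, a, norm_smul, abs_of_pos hz0, hz0.ne', h.1] using hz.1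
  have hq₂ : q₂ ∈ closedBall 0 1 := by
    simpa [q₂, b, norm_smul, abs_of_pos hz0, hz0.ne', h.2] using hz.1
  have hseg : z ∈ openSegment ℝ q₁ q₂ := by
    refine ⟨a, b, ha, hb, ?_, ?_⟩
    · rw [← add_div, ← hzn, div_self hz0.ne']
    · rw [smul_inv_smul₀ ha.ne', smul_inv_smul₀ hb.ne', ← toLp_add, Prod.mk_add_mk, add_zero,
        zero_add]
      rfl
  exact h.2 (by simpa [q₁] using congrArg WithLp.snd (hz.2 hq₁ hq₂ hseg).symm)

end WithLp

theorem UnifStronglyExposed.image_fst_subset {Γ : Set (WithLp 1 (E × E'))}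
    (hΓ : UnifStronglyExposed Γ) : WithLp.fst '' Γ ⊆ insert 0 (WithLp.inlₗᵢ 1 ⁻¹' Γ) := by
  rintro _ ⟨z, hz, rfl⟩
  have hext : z ∈ (closedBall 0 1).extremePoints ℝ :=
    exposedPoints_subset_extremePoints (hΓ.subset_exposedPoints hz)
  rcases WithLp.fst_eq_zero_or_snd_eq_zero_of_mem_extremePoints hext with h | h
  · exact .inl h
  · right
    change WithLp.toLp 1 (z.fst, (0 : E')) ∈ Γ
    rwa [← h]

theorem closedBall_subset_closure_convexHull_image_fst {Γ : Set (WithLp 1 (E × E'))}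
    (hΓ : closure (convexHull ℝ Γ) = closedBall 0 1) :
    closedBall (0 : E) 1 ⊆ closure (convexHull ℝ (WithLp.fst '' Γ)) := by
  intro x hx
  have hinl : WithLp.toLp 1 (x, (0 : E')) ∈ closure (convexHull ℝ Γ) := by
    simpa [hΓ] using hx
  have := image_closure_subset_closure_image (WithLp.fstL 1 ℝ E E').continuous
    (mem_image_of_mem _ hinl)
  rwa [← ContinuousLinearMap.coe_coe, LinearMap.image_convexHull] at this

theorem mem_closure_convexHull_of_mem_closure_convexHull_insert_zero {S : Set E}
    (hS : S ⊆ closedBall 0 1) {x : E} (hx : ‖x‖ = 1)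
    (hxS : x ∈ closure (convexHull ℝ (insert 0 S))) : x ∈ closure (convexHull ℝ S) := by
  rcases S.eq_empty_or_nonempty with rfl | hne
  · simp_all
  rw [Metric.mem_closure_iff] at hxS ⊢
  intro ε hε
  obtain ⟨y, hy, hxy⟩ := hxS (ε / 2) (by positivity)
  rw [convexHull_insert hne, mem_convexJoin] at hy
  obtain ⟨_, rfl, c, hc, a, t, ha, ht, hat, rfl⟩ := hy
  rw [smul_zero, zero_add] at hxy
  have hc1 : ‖c‖ ≤ 1 :=
    mem_closedBall_zero_iff.1 (convexHull_min hS (convex_closedBall 0 1) hc)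
  have hxy' : a ≤ dist x (t • c) := by
    have : ‖t • c‖ ≤ t := by
      rw [norm_smul, Real.norm_of_nonneg ht]; exact mul_le_of_le_one_right ht hc1
    rw [dist_eq_norm]; linarith [norm_sub_norm_le x (t • c)]
  have hyc : dist (t • c) c ≤ a := by
    rw [dist_eq_norm, show t • c - c = (t - 1) • c by rw [sub_smul, one_smul], norm_smul,
      Real.norm_of_nonpos (by linarith)]
    nlinarith [norm_nonneg c]
  exact ⟨c, hc, by linarith [dist_triangle x (t • c) c]⟩

end

theorem stmt_15_general {X Y : Type*}
    [NormedAddCommGroup X] [NormedSpace ℝ X] [Nontrivial X]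
    [NormedAddCommGroup Y] [NormedSpace ℝ Y]
    (Γ : Set (WithLp 1 (X × Y))) (hΓ : UnifStronglyExposed Γ)
    (hull : closure (convexHull ℝ Γ) = Metric.closedBall (0 : WithLp 1 (X × Y)) 1) :
    ∃ Δ : Set X, UnifStronglyExposed Δ ∧
      closure (convexHull ℝ Δ) = Metric.closedBall (0 : X) 1 := by
  have hΔ := hΓ.preimage_linearIsometry (WithLp.inlₗᵢ 1)
  have hΔ_ball : WithLp.inlₗᵢ 1 ⁻¹' Γ ⊆ closedBall (0 : X) 1 :=
    fun x hx => mem_closedBall_zero_iff.2 (hΔ.1 x hx).le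
  refine ⟨_, hΔ, subset_antisymm ?_ ?_⟩
  · exact closure_minimal (convexHull_min hΔ_ball (convex_closedBall 0 1)) isClosed_closedBall
  rw [← convexHull_sphere_eq_closedBall 0 zero_le_one]
  refine convexHull_min (fun x hx => ?_) (convex_convexHull ℝ _).closure
  have hx1 : ‖x‖ = 1 := mem_sphere_zero_iff_norm.1 hx
  refine mem_closure_convexHull_of_mem_closure_convexHull_insert_zero hΔ_ball hx1 ?_
  exact closure_mono (convexHull_mono hΓ.image_fst_subset)
    (closedBall_subset_closure_convexHull_image_fst hull (sphere_subset_closedBall hx))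

/-- If the unit sphere of `Z = X ⊕₁ Y` contains a uniformly strongly exposed set `Γ` whose
closed convex hull is `B_Z`, then the unit sphere of `X` contains a uniformly strongly
exposed set `Δ` whose closed convex hull is `B_X`. -/
theorem stmt_15 {X Y : Type*}
    [NormedAddCommGroup X] [NormedSpace ℝ X] [CompleteSpace X] [Nontrivial X]
    [NormedAddCommGroup Y] [NormedSpace ℝ Y] [CompleteSpace Y]
    (Γ : Set (WithLp 1 (X × Y))) (hΓ : UnifStronglyExposed Γ)
    (hull : closure (convexHull ℝ Γ) = Metric.closedBall (0 : WithLp 1 (X × Y)) 1) :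
    ∃ Δ : Set X, UnifStronglyExposed Δ ∧
      closure (convexHull ℝ Δ) = Metric.closedBall (0 : X) 1 :=
  stmt_15_general Γ hΓ hull
end

section
/- Let M be a metric space and Y a Banach space. Let B be the set of all Lipschitz maps f : M → Y with ‖f‖_L > 0 for which there exist η > 0, points x ≠ y in M, and r > 0 such that the closed balls B(x,r) and B(y,r) are compact and disjoint, and ‖f(u)−f(v)‖ ≤ (‖f‖_L − η)·d(u,v) for all u ≠ v with (u,v) ∉ (B(x,r)×B(y,r)) ∪ (B(y,r)×B(x,r)). Then: (1) B is open with respect to the Lipschitz-constant distance, i.e. for every f ∈ B there is δ > 0 such that every Lipschitz g : M → Y with ‖f−g‖_L < δ belongs to B; (2) every f ∈ B strongly attains its norm at a pair (u,v) failing property (Z): there exist u ≠ v with ‖f(u)−f(v)‖ = ‖f‖_L·d(u,v) and ε₀ > 0 such that (u,v)_z ≥ ε₀·min{d(u,z),d(v,z)} for all z ∈ M \ {u,v}. -/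
/-- Membership in the set `B`: `f` is a Lipschitz map with `‖f‖_L > 0` for which there are
`η > 0`, points `x ≠ y` and `r > 0` such that the closed balls `B(x,r)`, `B(y,r)` are compact
and disjoint, and `‖f u - f v‖ ≤ (‖f‖_L - η) d(u,v)` whenever the pair `(u,v)` does not lie
in `(B(x,r) × B(y,r)) ∪ (B(y,r) × B(x,r))`. -/
def MemB {M : Type*} [MetricSpace M] {Y : Type*} [NormedAddCommGroup Y] (f : M → Y) : Prop :=
  IsLip f ∧ 0 < lipNorm f ∧
  ∃ η > (0 : ℝ), ∃ x y : M, x ≠ y ∧ ∃ r > (0 : ℝ),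
    IsCompact (Metric.closedBall x r) ∧ IsCompact (Metric.closedBall y r) ∧
    Disjoint (Metric.closedBall x r) (Metric.closedBall y r) ∧
    ∀ u v : M, u ≠ v →
      ¬((u ∈ Metric.closedBall x r ∧ v ∈ Metric.closedBall y r) ∨
        (u ∈ Metric.closedBall y r ∧ v ∈ Metric.closedBall x r)) →
      ‖f u - f v‖ ≤ (lipNorm f - η) * dist u v

/-!
Openness: if `‖f - g‖_L = D`, then `‖g‖_L ≥ ‖f‖_L - D`, while off the two balls `g` still has
slope at most `‖f‖_L - η + D ≤ ‖g‖_L - (η - 2D)`; so the same balls work for `g` once `2D < η`.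

Attainment: the slope of `f` is continuous on the compact set `B(x,r) × B(y,r)` of pairs of
distinct points, so it has a maximum there; off these pairs the slope is at most `‖f‖_L - η`,
hence the maximum is `‖f‖_L`, attained at some `(u,v)`. For any `z`, one of the pairs `(u,z)`,
`(v,z)` avoids the two balls, say `(u,z)`, and then
`‖f‖_L d(u,v) ≤ ‖f u - f z‖ + ‖f v - f z‖ ≤ ‖f‖_L (d(u,z) + d(v,z)) - η d(u,z)`,
which bounds `(u,v)_z` below by `η / (2‖f‖_L) · min {d(u,z), d(v,z)}`.
-/

section LipNorm

variable {M : Type*} [MetricSpace M] {Y : Type*} [NormedAddCommGroup Y]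

lemma IsLip.bddAbove_slopes {f : M → Y} (hf : IsLip f) :
    BddAbove {r : ℝ | ∃ x y : M, x ≠ y ∧ r = ‖f x - f y‖ / dist x y} := by
  obtain ⟨K, hK⟩ := hf
  refine ⟨K, ?_⟩
  rintro r ⟨a, b, hab, rfl⟩
  rw [div_le_iff₀ (dist_pos.2 hab), ← dist_eq_norm]
  exact hK.dist_le_mul a b

lemma IsLip.sub {f g : M → Y} (hf : IsLip f) (hg : IsLip g) : IsLip fun p => f p - g p := by
  obtain ⟨Kf, hKf⟩ := hf
  obtain ⟨Kg, hKg⟩ := hg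
  exact ⟨Kf + Kg, hKf.sub hKg⟩

lemma lipNorm_nonneg (f : M → Y) : 0 ≤ lipNorm f :=
  Real.sSup_nonneg (by rintro r ⟨a, b, -, rfl⟩; positivity)

lemma IsLip.norm_sub_le_lipNorm_mul_dist {f : M → Y} (hf : IsLip f) (a b : M) :
    ‖f a - f b‖ ≤ lipNorm f * dist a b := by
  rcases eq_or_ne a b with rfl | hab
  · simp
  · rw [← div_le_iff₀ (dist_pos.2 hab)]
    exact le_csSup hf.bddAbove_slopes ⟨a, b, hab, rfl⟩

lemma lipNorm_le_of_forall {f : M → Y} {c : ℝ} (hc : 0 ≤ c)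
    (h : ∀ a b : M, a ≠ b → ‖f a - f b‖ ≤ c * dist a b) : lipNorm f ≤ c := by
  refine Real.sSup_le ?_ hc
  rintro r ⟨a, b, hab, rfl⟩
  rw [div_le_iff₀ (dist_pos.2 hab)]
  exact h a b hab

lemma norm_sub_le_norm_sub_add_lipNorm_sub {f g : M → Y} (hfg : IsLip fun p => f p - g p)
    (a b : M) :
    ‖g a - g b‖ ≤ ‖f a - f b‖ + lipNorm (fun p => f p - g p) * dist a b := by
  calc ‖g a - g b‖ = ‖(f a - f b) - ((f a - g a) - (f b - g b))‖ := by congr 1; abel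
    _ ≤ ‖f a - f b‖ + ‖(f a - g a) - (f b - g b)‖ := norm_sub_le _ _
    _ ≤ ‖f a - f b‖ + lipNorm (fun p => f p - g p) * dist a b := by
      gcongr
      exact hfg.norm_sub_le_lipNorm_mul_dist a b

lemma lipNorm_le_lipNorm_add_lipNorm_sub {f g : M → Y} (hg : IsLip g)
    (hfg : IsLip fun p => f p - g p) :
    lipNorm f ≤ lipNorm g + lipNorm (fun p => f p - g p) := by
  refine lipNorm_le_of_forall (add_nonneg (lipNorm_nonneg g) (lipNorm_nonneg _)) fun a b _ => ?_
  calc ‖f a - f b‖ = ‖(g a - g b) + ((f a - g a) - (f b - g b))‖ := by congr 1; abel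
    _ ≤ ‖g a - g b‖ + ‖(f a - g a) - (f b - g b)‖ := norm_add_le _ _
    _ ≤ lipNorm g * dist a b + lipNorm (fun p => f p - g p) * dist a b :=
      add_le_add (hg.norm_sub_le_lipNorm_mul_dist a b) (hfg.norm_sub_le_lipNorm_mul_dist a b)
    _ = (lipNorm g + lipNorm (fun p => f p - g p)) * dist a b := by ring

end LipNorm

section Cross

variable {α : Type*} {S T : Set α} {u z : α}

lemma not_cross_of_mem_of_notMem (hST : Disjoint S T) (hu : u ∈ S) (hz : z ∉ T) :
    ¬((u ∈ S ∧ z ∈ T) ∨ (u ∈ T ∧ z ∈ S)) := by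
  rintro (⟨-, hzT⟩ | ⟨huT, -⟩)
  · exact hz hzT
  · exact Set.disjoint_left.mp hST hu huT

end Cross

section Gromov

variable {M : Type*} [PseudoMetricSpace M] {Y : Type*} [SeminormedAddCommGroup Y]

lemma min_mul_le_of_norm_sub_eq {f : M → Y} {L η : ℝ} (hη : 0 ≤ η)
    (hL : ∀ a b : M, ‖f a - f b‖ ≤ L * dist a b) {u v z : M}
    (hattain : ‖f u - f v‖ = L * dist u v)
    (hz : ‖f u - f z‖ ≤ (L - η) * dist u z ∨ ‖f v - f z‖ ≤ (L - η) * dist v z) :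
    η * min (dist u z) (dist v z) ≤ L * (dist u z + dist v z - dist u v) := by
  have hsplit : ‖f u - f v‖ ≤ ‖f u - f z‖ + ‖f v - f z‖ :=
    calc ‖f u - f v‖ = ‖(f u - f z) - (f v - f z)‖ := by congr 1; abel
      _ ≤ ‖f u - f z‖ + ‖f v - f z‖ := norm_sub_le _ _
  have hmin_u : η * min (dist u z) (dist v z) ≤ η * dist u z := by gcongr; exact min_le_left _ _
  have hmin_v : η * min (dist u z) (dist v z) ≤ η * dist v z := by gcongr; exact min_le_right _ _
  rcases hz with hz | hz
  · linarith [hL v z]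
  · linarith [hL u z]

end Gromov

section Attainment

variable {M : Type*} [MetricSpace M] {Y : Type*} [NormedAddCommGroup Y]

lemma IsLip.exists_norm_sub_eq_lipNorm_mul_dist {f : M → Y} (hf : IsLip f) {S T : Set M}
    (hS : IsCompact S) (hT : IsCompact T) (hST : Disjoint S T) (hSne : S.Nonempty)
    (hTne : T.Nonempty) {η : ℝ} (hη : 0 < η)
    (hoff : ∀ u v : M, u ≠ v → ¬((u ∈ S ∧ v ∈ T) ∨ (u ∈ T ∧ v ∈ S)) →
      ‖f u - f v‖ ≤ (lipNorm f - η) * dist u v) :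
    ∃ u ∈ S, ∃ v ∈ T, ‖f u - f v‖ = lipNorm f * dist u v := by
  have hne : ∀ p ∈ S ×ˢ T, p.1 ≠ p.2 := fun p hp h =>
    Set.disjoint_left.mp hST hp.1 (h ▸ hp.2)
  set slope : M × M → ℝ := fun p => ‖f p.1 - f p.2‖ / dist p.1 p.2
  have hcont : ContinuousOn slope (S ×ˢ T) := by
    obtain ⟨K, hK⟩ := hf
    refine ContinuousOn.div ?_ continuous_dist.continuousOn fun p hp => dist_ne_zero.2 (hne p hp)
    exact ((hK.continuous.comp continuous_fst).sub (hK.continuous.comp continuous_snd)).norm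
      |>.continuousOn
  obtain ⟨⟨u, v⟩, ⟨hu, hv⟩, hmax⟩ :=
    (hS.prod hT).exists_isMaxOn (hSne.prod hTne) hcont
  have huv : u ≠ v := hne (u, v) ⟨hu, hv⟩
  have hdist : 0 < dist u v := dist_pos.2 huv
  have hslope_le : ∀ a ∈ S, ∀ b ∈ T, ‖f a - f b‖ ≤ slope (u, v) * dist a b := fun a ha b hb => by
    rw [← div_le_iff₀ (dist_pos.2 (hne (a, b) ⟨ha, hb⟩))]
    exact hmax (show (a, b) ∈ S ×ˢ T from ⟨ha, hb⟩)
  have hlip : lipNorm f ≤ max (slope (u, v)) (lipNorm f - η) := by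
    refine lipNorm_le_of_forall (le_max_of_le_left (by positivity)) fun a b hab => ?_
    by_cases hcross : (a ∈ S ∧ b ∈ T) ∨ (a ∈ T ∧ b ∈ S)
    · refine le_trans ?_ (mul_le_mul_of_nonneg_right (le_max_left _ _) dist_nonneg)
      rcases hcross with ⟨ha, hb⟩ | ⟨ha, hb⟩
      · exact hslope_le a ha b hb
      · rw [norm_sub_rev, dist_comm]
        exact hslope_le b hb a ha
    · exact (hoff a b hab hcross).trans
        (mul_le_mul_of_nonneg_right (le_max_right _ _) dist_nonneg)
  have hslope : slope (u, v) = lipNorm f :=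
    le_antisymm (le_csSup hf.bddAbove_slopes ⟨u, v, huv, rfl⟩)
      (by simpa [hη.not_ge] using hlip)
  refine ⟨u, hu, v, hv, ?_⟩
  rw [← hslope]
  exact (div_mul_cancel₀ _ hdist.ne').symm

end Attainment

section MemB

variable {M : Type*} [MetricSpace M] {Y : Type*} [NormedAddCommGroup Y]

lemma MemB.exists_forall_memB {f : M → Y} (hf : MemB f) :
    ∃ δ > (0 : ℝ), ∀ g : M → Y, IsLip g → lipNorm (fun p => f p - g p) < δ → MemB g := by
  obtain ⟨hfLip, hL, η, hη, x, y, hxy, r, hr, hcx, hcy, hdisj, hoff⟩ := hf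
  refine ⟨min (η / 2) (lipNorm f), lt_min (by linarith) hL, fun g hg hD => ?_⟩
  set D := lipNorm fun p => f p - g p
  have hD_η : D < η / 2 := hD.trans_le (min_le_left _ _)
  have hD_L : D < lipNorm f := hD.trans_le (min_le_right _ _)
  have hfg : IsLip fun p => f p - g p := hfLip.sub hg
  have hLg : lipNorm f ≤ lipNorm g + D := lipNorm_le_lipNorm_add_lipNorm_sub hg hfg
  refine ⟨hg, by linarith, η - 2 * D, by linarith, x, y, hxy, r, hr, hcx, hcy, hdisj,
    fun u v huv hcross => ?_⟩
  calc ‖g u - g v‖ ≤ ‖f u - f v‖ + D * dist u v := norm_sub_le_norm_sub_add_lipNorm_sub hfg u v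
    _ ≤ (lipNorm f - η) * dist u v + D * dist u v := by gcongr; exact hoff u v huv hcross
    _ = (lipNorm f - η + D) * dist u v := by ring
    _ ≤ (lipNorm g - (η - 2 * D)) * dist u v := by gcongr; linarith

lemma MemB.exists_attains_lipNorm_of_gromov_ge {f : M → Y} (hf : MemB f) :
    ∃ u v : M, u ≠ v ∧ ‖f u - f v‖ = lipNorm f * dist u v ∧
      ∃ ε₀ > (0 : ℝ), ∀ z : M, z ≠ u → z ≠ v →
        ε₀ * min (dist u z) (dist v z) ≤ (dist u z + dist v z - dist u v) / 2 := by
  obtain ⟨hfLip, hL, η, hη, x, y, -, r, hr, hcx, hcy, hdisj, hoff⟩ := hf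
  obtain ⟨u, hu, v, hv, hattain⟩ := hfLip.exists_norm_sub_eq_lipNorm_mul_dist hcx hcy hdisj
    ⟨x, Metric.mem_closedBall_self hr.le⟩ ⟨y, Metric.mem_closedBall_self hr.le⟩ hη hoff
  have huv : u ≠ v := fun h => Set.disjoint_left.mp hdisj hu (h ▸ hv)
  refine ⟨u, v, huv, hattain, η / (2 * lipNorm f), by positivity, fun z hzu hzv => ?_⟩
  have hz : ‖f u - f z‖ ≤ (lipNorm f - η) * dist u z ∨
      ‖f v - f z‖ ≤ (lipNorm f - η) * dist v z := by
    by_cases hzy : z ∈ Metric.closedBall y r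
    · have hzx : z ∉ Metric.closedBall x r := Set.disjoint_right.mp hdisj hzy
      exact .inr <| hoff v z hzv.symm <| by
        simpa only [or_comm] using not_cross_of_mem_of_notMem hdisj.symm hv hzx
    · exact .inl <| hoff u z hzu.symm <| not_cross_of_mem_of_notMem hdisj hu hzy
  have key := min_mul_le_of_norm_sub_eq hη.le hfLip.norm_sub_le_lipNorm_mul_dist hattain hz
  rw [div_mul_eq_mul_div, div_le_div_iff₀ (by positivity) two_pos]
  linarith

end MemB

theorem stmt_16_general {M : Type*} [MetricSpace M]
    {Y : Type*} [NormedAddCommGroup Y] :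
    (∀ f : M → Y, MemB f → ∃ δ > (0 : ℝ), ∀ g : M → Y, IsLip g →
      lipNorm (fun p => f p - g p) < δ → MemB g) ∧
    (∀ f : M → Y, MemB f → ∃ u v : M, u ≠ v ∧ ‖f u - f v‖ = lipNorm f * dist u v ∧
      ∃ ε₀ > (0 : ℝ), ∀ z : M, z ≠ u → z ≠ v →
        ε₀ * min (dist u z) (dist v z) ≤ (dist u z + dist v z - dist u v) / 2) :=
  ⟨fun _ hf => hf.exists_forall_memB, fun _ hf => hf.exists_attains_lipNorm_of_gromov_ge⟩

/-- The set `B` is open in the Lipschitz distance, and every member of `B` strongly attains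
its norm at a pair failing property (Z). -/
theorem stmt_16 {M : Type*} [MetricSpace M]
    {Y : Type*} [NormedAddCommGroup Y] [NormedSpace ℝ Y] [CompleteSpace Y] :
    (∀ f : M → Y, MemB f → ∃ δ > (0 : ℝ), ∀ g : M → Y, IsLip g →
      lipNorm (fun p => f p - g p) < δ → MemB g) ∧
    (∀ f : M → Y, MemB f → ∃ u v : M, u ≠ v ∧ ‖f u - f v‖ = lipNorm f * dist u v ∧
      ∃ ε₀ > (0 : ℝ), ∀ z : M, z ≠ u → z ≠ v →
        ε₀ * min (dist u z) (dist v z) ≤ (dist u z + dist v z - dist u v) / 2) :=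
  stmt_16_general
end

section
/- Let X be a Banach space with property α. Then for every Banach space Y ≠ {0}, the set of absolutely strongly exposing operators from X to Y is dense in the space L(X,Y) of bounded linear operators with the operator norm. -/
open Filter Topology

/-- Property α of a normed space `X`: there are a symmetric family of unit vectors `(x l)`,
norm-one functionals `(φ l)` with `|φ l (x l)| = 1`, and a constant `0 ≤ ρ < 1` with
`|φ l (x m)| ≤ ρ` whenever `x l ≠ ± x m`, such that the closed convex hull of the `x l`
equals the closed unit ball. -/
def PropAlpha (X : Type*) [NormedAddCommGroup X] [NormedSpace ℝ X] : Prop :=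
  ∃ (Λ : Type) (x : Λ → X) (φ : Λ → X →L[ℝ] ℝ) (ρ : ℝ),
    0 ≤ ρ ∧ ρ < 1 ∧
    (∀ l : Λ, ∃ m : Λ, x m = -x l) ∧
    (∀ l : Λ, ‖x l‖ = 1 ∧ ‖φ l‖ = 1 ∧ |φ l (x l)| = 1) ∧
    (∀ l m : Λ, x l ≠ x m → x l ≠ -x m → |φ l (x m)| ≤ ρ) ∧
    closure (convexHull ℝ (Set.range x)) = Metric.closedBall (0 : X) 1

/-!
Pick `x₀ = x l₀` with `‖T x₀‖ > ‖T‖ - η (1 - ρ)` and add to `T` the rank-one operator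
`η ψ(·) w`, where `ψ = ±φ l₀` has `ψ x₀ = 1` and the unit vector `w` satisfies
`‖T x₀ + η w‖ = ‖T x₀‖ + η`. The result `S` is `η`-close to `T` and peaks strictly at `±x₀`:
`‖S x₀‖ = ‖T x₀‖ + η > M' := ‖T‖ + η ρ ≥ ‖S (x l)‖` whenever `x l ≠ ±x₀`.
Writing a point of the convex hull of the family as `t x₀ + θ b` with `|t| + θ ≤ 1`, `‖b‖ ≤ 1`
and `‖S b‖ ≤ M'` gives `(‖S x₀‖ - M') min ‖u - x₀‖ ‖u + x₀‖ ≤ 2 (‖S‖ - ‖S u‖)` on the hull,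
hence on its closure, the unit ball; so maximising sequences of `S` accumulate only at `±x₀`.
-/

open Set Metric

section Hull

variable {X : Type*} [AddCommGroup X] [Module ℝ X]

theorem exists_eq_smul_add_smul_of_mem_convexJoin_segment {s : Set X} {x₀ v : X}
    (hv : v ∈ convexJoin ℝ (segment ℝ (-x₀) x₀) s) :
    ∃ t θ : ℝ, ∃ b ∈ s, 0 ≤ θ ∧ |t| + θ ≤ 1 ∧ v = t • x₀ + θ • b := by
  obtain ⟨p, ⟨a, b, ha, hb, hab, rfl⟩, q, hq, c, d, hc, hd, hcd, rfl⟩ := mem_convexJoin.1 hv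
  refine ⟨c * (b - a), d, q, hq, hd, ?_, by module⟩
  have hba : |b - a| ≤ 1 := abs_le.2 ⟨by linarith, by linarith⟩
  rw [abs_mul, abs_of_nonneg hc]
  nlinarith

end Hull

section Operator

variable {X Y : Type*} [NormedAddCommGroup X] [NormedSpace ℝ X]
  [NormedAddCommGroup Y] [NormedSpace ℝ Y]

theorem opNorm_le_of_closure_convexHull_eq_closedBall {Λ : Type*} {x : Λ → X}
    (hball : closure (convexHull ℝ (range x)) = closedBall 0 1) (S : X →L[ℝ] Y) {C : ℝ}
    (h : ∀ l, ‖S (x l)‖ ≤ C) : ‖S‖ ≤ C := by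
  have hsub : closedBall (0 : X) 1 ⊆ S ⁻¹' closedBall 0 C := by
    rw [← hball]
    refine closure_minimal (convexHull_min ?_ ?_) ?_
    · rintro _ ⟨l, rfl⟩
      simpa using h l
    · exact (convex_closedBall 0 C).linear_preimage S.toLinearMap
    · exact isClosed_closedBall.preimage S.continuous
  have hC : 0 ≤ C := by simpa using hsub (mem_closedBall_self zero_le_one)
  exact S.opNorm_le_of_unit_norm hC fun v hv => by simpa using hsub (by simp [hv])

theorem exists_lt_norm_apply_of_closure_convexHull_eq_closedBall {Λ : Type*} {x : Λ → X}
    (hball : closure (convexHull ℝ (range x)) = closedBall 0 1) (T : X →L[ℝ] Y) {δ : ℝ}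
    (hδ : 0 < δ) : ∃ l, ‖T‖ - δ < ‖T (x l)‖ := by
  by_contra! h
  linarith [opNorm_le_of_closure_convexHull_eq_closedBall hball T h]

theorem norm_add_smulRight_apply_le (T : X →L[ℝ] Y) (ψ : X →L[ℝ] ℝ) (y : Y) (v : X) :
    ‖(T + ψ.smulRight y) v‖ ≤ ‖T‖ * ‖v‖ + |ψ v| * ‖y‖ := by
  rw [add_apply, ContinuousLinearMap.smulRight_apply, ← Real.norm_eq_abs,
    ← norm_smul (ψ v)]
  exact (norm_add_le _ _).trans (by gcongr; exact T.le_opNorm v)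

end Operator

theorem exists_norm_eq_one_norm_add_smul {Y : Type*} [NormedAddCommGroup Y] [NormedSpace ℝ Y]
    [Nontrivial Y] (y : Y) {η : ℝ} (hη : 0 ≤ η) : ∃ w : Y, ‖w‖ = 1 ∧ ‖y + η • w‖ = ‖y‖ + η := by
  obtain ⟨w, hw, hyw⟩ : ∃ w : Y, ‖w‖ = 1 ∧ SameRay ℝ y w := by
    rcases eq_or_ne y 0 with rfl | hy
    · obtain ⟨w, hw⟩ := exists_norm_eq Y zero_le_one
      exact ⟨w, hw, SameRay.zero_left w⟩
    · exact ⟨‖y‖⁻¹ • y, norm_smul_inv_norm hy,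
        SameRay.sameRay_pos_smul_right y (inv_pos.2 (norm_pos_iff.2 hy))⟩
  refine ⟨w, hw, ?_⟩
  rw [SameRay.norm_add (hyw.nonneg_smul_right hη), norm_smul, hw, mul_one, Real.norm_of_nonneg hη]

section Peak

variable {X Y : Type*} [NormedAddCommGroup X] [NormedSpace ℝ X]
  [NormedAddCommGroup Y] [NormedSpace ℝ Y]

theorem mul_norm_smul_add_smul_sub_le {S : X →L[ℝ] Y} {x₀ b : X} {t θ M' : ℝ}
    (hx₀ : ‖x₀‖ ≤ 1) (hM' : 0 ≤ M') (hM'S : M' ≤ ‖S x₀‖) (ht : 0 ≤ t) (hθ : 0 ≤ θ)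
    (htθ : t + θ ≤ 1) (hb : ‖b‖ ≤ 1) (hSb : ‖S b‖ ≤ M') :
    (‖S x₀‖ - M') * ‖t • x₀ + θ • b - x₀‖ ≤ 2 * (‖S x₀‖ - ‖S (t • x₀ + θ • b)‖) := by
  have hdist : ‖t • x₀ + θ • b - x₀‖ ≤ 2 * (1 - t) := by
    rw [show t • x₀ + θ • b - x₀ = (1 - t) • (-x₀) + θ • b by module]
    refine (norm_add_le _ _).trans ?_
    rw [norm_smul, norm_smul, norm_neg, Real.norm_of_nonneg (by linarith), Real.norm_of_nonneg hθ]
    nlinarith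
  have hval : ‖S (t • x₀ + θ • b)‖ ≤ t * ‖S x₀‖ + (1 - t) * M' := by
    rw [map_add, map_smul, map_smul]
    refine (norm_add_le _ _).trans ?_
    rw [norm_smul, norm_smul, Real.norm_of_nonneg ht, Real.norm_of_nonneg hθ]
    nlinarith
  nlinarith

theorem mul_min_norm_sub_le_of_eq_smul_add_smul {S : X →L[ℝ] Y} {x₀ b : X} {t θ M' : ℝ}
    (hx₀ : ‖x₀‖ ≤ 1) (hM' : 0 ≤ M') (hM'S : M' ≤ ‖S x₀‖) (hθ : 0 ≤ θ)
    (htθ : |t| + θ ≤ 1) (hb : ‖b‖ ≤ 1) (hSb : ‖S b‖ ≤ M') :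
    (‖S x₀‖ - M') * min ‖t • x₀ + θ • b - x₀‖ ‖t • x₀ + θ • b + x₀‖ ≤
      2 * (‖S x₀‖ - ‖S (t • x₀ + θ • b)‖) := by
  have hgap : 0 ≤ ‖S x₀‖ - M' := sub_nonneg.2 hM'S
  rcases le_total 0 t with ht | ht
  · refine (mul_le_mul_of_nonneg_left (min_le_left _ _) hgap).trans ?_
    rw [abs_of_nonneg ht] at htθ
    exact mul_norm_smul_add_smul_sub_le hx₀ hM' hM'S ht hθ htθ hb hSb
  · refine (mul_le_mul_of_nonneg_left (min_le_right _ _) hgap).trans ?_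
    rw [abs_of_nonpos ht] at htθ
    have := mul_norm_smul_add_smul_sub_le (S := S) (x₀ := -x₀) (t := -t)
      (by rwa [norm_neg]) hM' (by rwa [map_neg, norm_neg]) (neg_nonneg.2 ht) hθ htθ hb hSb
    simpa only [map_neg, norm_neg, neg_smul_neg, sub_neg_eq_add] using this

variable {Λ : Type*} {x : Λ → X} {S : X →L[ℝ] Y} {x₀ : X} {M' : ℝ}

theorem mul_min_norm_sub_le_of_peak
    (hball : closure (convexHull ℝ (range x)) = closedBall 0 1) (hx₀ : ‖x₀‖ = 1)
    (hM' : 0 ≤ M') (hM'S : M' ≤ ‖S x₀‖)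
    (hpeak : ∀ l, x l ≠ x₀ → x l ≠ -x₀ → ‖S (x l)‖ ≤ M') {u : X} (hu : ‖u‖ ≤ 1) :
    (‖S x₀‖ - M') * min ‖u - x₀‖ ‖u + x₀‖ ≤ 2 * (‖S x₀‖ - ‖S u‖) := by
  set B : Set X := closedBall 0 1 ∩ S ⁻¹' closedBall 0 M'
  have hB : Convex ℝ B :=
    (convex_closedBall _ _).inter ((convex_closedBall _ _).linear_preimage S.toLinearMap)
  have hB0 : (0 : X) ∈ B := by simp [B, hM']
  have hrange : range x ⊆ segment ℝ (-x₀) x₀ ∪ B := by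
    rintro _ ⟨l, rfl⟩
    by_cases h₁ : x l = x₀
    · exact Or.inl (h₁ ▸ right_mem_segment ℝ _ _)
    by_cases h₂ : x l = -x₀
    · exact Or.inl (h₂ ▸ left_mem_segment ℝ _ _)
    refine Or.inr ⟨?_, by simpa using hpeak l h₁ h₂⟩
    exact hball ▸ subset_closure (subset_convexHull ℝ _ (mem_range_self l))
  have hhull : convexHull ℝ (range x) ⊆
      {u | (‖S x₀‖ - M') * min ‖u - x₀‖ ‖u + x₀‖ ≤ 2 * (‖S x₀‖ - ‖S u‖)} := by
    refine (convexHull_mono hrange).trans ?_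
    rw [(convex_segment _ _).convexHull_union hB ⟨x₀, right_mem_segment ℝ _ _⟩ ⟨0, hB0⟩]
    intro v hv
    obtain ⟨t, θ, b, ⟨hb, hSb⟩, hθ, htθ, rfl⟩ :=
      exists_eq_smul_add_smul_of_mem_convexJoin_segment hv
    exact mul_min_norm_sub_le_of_eq_smul_add_smul hx₀.le hM' hM'S hθ htθ
      (by simpa using hb) (by simpa using hSb)
  have hclosed : IsClosed
      {u | (‖S x₀‖ - M') * min ‖u - x₀‖ ‖u + x₀‖ ≤ 2 * (‖S x₀‖ - ‖S u‖)} :=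
    isClosed_le (by fun_prop) (by fun_prop)
  have hball_sub := closure_minimal hhull hclosed
  rw [hball] at hball_sub
  exact hball_sub (by simpa using hu)

theorem opNorm_eq_of_peak (hball : closure (convexHull ℝ (range x)) = closedBall 0 1)
    (hx₀ : ‖x₀‖ = 1) (hM'S : M' ≤ ‖S x₀‖)
    (hpeak : ∀ l, x l ≠ x₀ → x l ≠ -x₀ → ‖S (x l)‖ ≤ M') : ‖S‖ = ‖S x₀‖ := by
  refine le_antisymm (opNorm_le_of_closure_convexHull_eq_closedBall hball S fun l => ?_)
    (S.unit_le_opNorm x₀ hx₀.le)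
  by_cases h₁ : x l = x₀
  · rw [h₁]
  by_cases h₂ : x l = -x₀
  · rw [h₂, map_neg, norm_neg]
  exact (hpeak l h₁ h₂).trans hM'S

end Peak

section Subsequence

variable {α : Type*} [PseudoMetricSpace α] {u : ℕ → α} {a b : α}

theorem exists_strictMono_tendsto_of_frequently_dist_le
    (h : Tendsto (fun n => min (dist (u n) a) (dist (u n) b)) atTop (𝓝 0))
    (hfreq : ∃ᶠ n in atTop, dist (u n) a ≤ dist (u n) b) :
    ∃ σ : ℕ → ℕ, StrictMono σ ∧ Tendsto (fun k => u (σ k)) atTop (𝓝 a) := by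
  obtain ⟨σ, hσ, hσa⟩ := extraction_of_frequently_atTop hfreq
  refine ⟨σ, hσ, tendsto_iff_dist_tendsto_zero.2 ?_⟩
  exact squeeze_zero (fun _ => dist_nonneg) (fun k => (min_eq_left (hσa k)).ge)
    (h.comp hσ.tendsto_atTop)

theorem exists_strictMono_tendsto_or_tendsto_of_tendsto_min_dist
    (h : Tendsto (fun n => min (dist (u n) a) (dist (u n) b)) atTop (𝓝 0)) :
    ∃ σ : ℕ → ℕ, StrictMono σ ∧
      (Tendsto (fun k => u (σ k)) atTop (𝓝 a) ∨ Tendsto (fun k => u (σ k)) atTop (𝓝 b)) := by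
  rcases frequently_or_distrib.1 (Frequently.of_forall (f := atTop) fun n =>
    le_total (dist (u n) a) (dist (u n) b)) with hfreq | hfreq
  · obtain ⟨σ, hσ, hσa⟩ := exists_strictMono_tendsto_of_frequently_dist_le h hfreq
    exact ⟨σ, hσ, Or.inl hσa⟩
  · simp only [min_comm (dist _ a)] at h
    obtain ⟨σ, hσ, hσb⟩ := exists_strictMono_tendsto_of_frequently_dist_le h hfreq
    exact ⟨σ, hσ, Or.inr hσb⟩

end Subsequence

section Exposing

variable {X Y : Type*} [NormedAddCommGroup X] [NormedSpace ℝ X]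
  [NormedAddCommGroup Y] [NormedSpace ℝ Y] {S : X →L[ℝ] Y} {x₀ : X}

theorem absStronglyExposing_of_min_norm_sub_le (hx₀ : ‖x₀‖ = 1) {K : ℝ}
    (h : ∀ u : X, ‖u‖ ≤ 1 → min ‖u - x₀‖ ‖u + x₀‖ ≤ K * (‖S‖ - ‖S u‖)) :
    AbsStronglyExposing S := by
  refine ⟨x₀, hx₀, fun u hu hS => exists_strictMono_tendsto_or_tendsto_of_tendsto_min_dist ?_⟩
  have hK : Tendsto (fun n => K * (‖S‖ - ‖S (u n)‖)) atTop (𝓝 0) := by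
    simpa using ((tendsto_const_nhds (x := ‖S‖)).sub hS).const_mul K
  refine squeeze_zero (fun _ => le_min dist_nonneg dist_nonneg) (fun n => ?_) hK
  simpa only [dist_eq_norm, sub_neg_eq_add] using h (u n) (hu n)

theorem absStronglyExposing_of_peak {Λ : Type*} {x : Λ → X}
    (hball : closure (convexHull ℝ (range x)) = closedBall 0 1) (hx₀ : ‖x₀‖ = 1) {M' : ℝ}
    (hM' : 0 ≤ M') (hM'S : M' < ‖S x₀‖)
    (hpeak : ∀ l, x l ≠ x₀ → x l ≠ -x₀ → ‖S (x l)‖ ≤ M') : AbsStronglyExposing S := by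
  refine absStronglyExposing_of_min_norm_sub_le hx₀ (K := 2 / (‖S x₀‖ - M')) fun u hu => ?_
  rw [opNorm_eq_of_peak hball hx₀ hM'S.le hpeak, div_mul_eq_mul_div,
    le_div_iff₀ (sub_pos.2 hM'S), mul_comm]
  exact mul_min_norm_sub_le_of_peak hball hx₀ hM' hM'S.le hpeak hu

end Exposing

theorem stmt_17_general {X : Type*} [NormedAddCommGroup X] [NormedSpace ℝ X]
    (hX : PropAlpha X)
    {Y : Type*} [NormedAddCommGroup Y] [NormedSpace ℝ Y] [Nontrivial Y]
    (T : X →L[ℝ] Y) (ε : ℝ) (hε : 0 < ε) :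
    ∃ S : X →L[ℝ] Y, AbsStronglyExposing S ∧ ‖T - S‖ < ε := by
  obtain ⟨Λ, x, φ, ρ, hρ0, hρ1, -, hnorm, hsep, hball⟩ := hX
  obtain ⟨η, hη, hηε⟩ : ∃ η, 0 < η ∧ η < ε := ⟨ε / 2, half_pos hε, half_lt_self hε⟩
  obtain ⟨l₀, hl₀⟩ := exists_lt_norm_apply_of_closure_convexHull_eq_closedBall hball T
    (mul_pos hη (sub_pos.2 hρ1))
  obtain ⟨hx₀, hφ, hφx₀⟩ := hnorm l₀
  set ψ := φ l₀ (x l₀) • φ l₀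
  have hψ : ∀ v, |ψ v| = |φ l₀ v| := fun v => by simp [ψ, abs_mul, hφx₀]
  have hψx₀ : ψ (x l₀) = 1 := by
    rw [smul_apply, smul_eq_mul, ← abs_mul_abs_self, hφx₀, one_mul]
  obtain ⟨w, hw, hTw⟩ := exists_norm_eq_one_norm_add_smul (T (x l₀)) hη.le
  refine ⟨T + ψ.smulRight (η • w),
    absStronglyExposing_of_peak hball hx₀ (M' := ‖T‖ + η * ρ) (by positivity) ?_ ?_, ?_⟩
  · simp only [add_apply, ContinuousLinearMap.smulRight_apply, hψx₀, one_smul, hTw]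
    linarith
  · intro l h₁ h₂
    refine (norm_add_smulRight_apply_le T ψ (η • w) (x l)).trans ?_
    have hρl : |φ l₀ (x l)| ≤ ρ :=
      hsep l₀ l (Ne.symm h₁) fun h => h₂ (by rw [h, neg_neg])
    rw [(hnorm l).1, hψ, norm_smul, hw, Real.norm_of_nonneg hη.le]
    nlinarith
  · rw [sub_add_cancel_left, norm_neg, ContinuousLinearMap.norm_smulRight_apply, norm_smul,
      norm_smul, hw, hφ, Real.norm_eq_abs, hφx₀, Real.norm_of_nonneg hη.le]
    simpa using hηε

/-- If a Banach space `X` has property α, then for every nonzero Banach space `Y` the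
absolutely strongly exposing operators are dense in `L(X,Y)`. -/
theorem stmt_17 {X : Type*} [NormedAddCommGroup X] [NormedSpace ℝ X] [CompleteSpace X]
    (hX : PropAlpha X)
    {Y : Type*} [NormedAddCommGroup Y] [NormedSpace ℝ Y] [CompleteSpace Y] [Nontrivial Y]
    (T : X →L[ℝ] Y) (ε : ℝ) (hε : 0 < ε) :
    ∃ S : X →L[ℝ] Y, AbsStronglyExposing S ∧ ‖T - S‖ < ε :=
  stmt_17_general hX T ε hε
end
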